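/- Preservation of conclusion equivalence along transitions: Let D be a basic defeasible theory with duplicated strict rules (interpreted with separated reasoning). Suppose there is a sequence of transitions (D, ∅) ⟹ ⋯ ⟹ (D', C'). Then D ≡ D', i.e. D and D' have identical sets of consequences. -/
import Mathlib


/-- A propositional literal: an atom or its negation. -/
inductive Lit where
  | pos : ℕ → Lit
  | neg : ℕ → Lit
deriving DecidableEq

/-- The complement ~q of a literal q. -/
def Lit.compl : Lit → Lit
  | .pos n => .neg n
  | .neg n => .pos n

/-- The atom underlying a literal. -/
def Lit.atom : Lit → ℕ
  | .pos n => n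
  | .neg n => n

/-- The three kinds of rules: strict (→), defeasible (⇒), defeater (⇝). -/
inductive RuleKind where
  | strict | defeasible | defeater
deriving DecidableEq

/-- A rule: a finite body of literals, a head literal, and a kind. -/
structure Rule where
  body : Finset Lit
  head : Lit
  kind : RuleKind
deriving DecidableEq

/-- A propositional defeasible theory: finite facts, finite rules, and an
acyclic superiority relation on rules. -/
structure DTheory where
  facts : Finset Lit
  rules : Finset Rule
  sup : Rule → Rule → Prop
  sup_acyclic : ∀ r, ¬ Relation.TransGen sup r r

/-- Tagged literals (extended conclusions): tags ±Δ, ±∂, ±σ. -/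
inductive TaggedLit where
  | pDelta : Lit → TaggedLit
  | mDelta : Lit → TaggedLit
  | pPartial : Lit → TaggedLit
  | mPartial : Lit → TaggedLit
  | pSigma : Lit → TaggedLit
  | mSigma : Lit → TaggedLit
deriving DecidableEq

/-- The literal of a tagged literal. -/
def TaggedLit.lit : TaggedLit → Lit
  | .pDelta q => q
  | .mDelta q => q
  | .pPartial q => q
  | .mPartial q => q
  | .pSigma q => q
  | .mSigma q => q

/-- Tagged literals whose tag is among +Δ, −Δ, +∂, −∂ (conclusions proper). -/
def TaggedLit.IsConclusionTag : TaggedLit → Prop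
  | .pDelta _ => True
  | .mDelta _ => True
  | .pPartial _ => True
  | .mPartial _ => True
  | .pSigma _ => False
  | .mSigma _ => False

/-- R_s[q]: strict rules with head q. -/
def DTheory.Rs (D : DTheory) (q : Lit) : Set Rule :=
  {r | r ∈ D.rules ∧ r.kind = RuleKind.strict ∧ r.head = q}

/-- R_sd[q]: strict and defeasible rules with head q. -/
def DTheory.Rsd (D : DTheory) (q : Lit) : Set Rule :=
  {r | r ∈ D.rules ∧ r.kind ≠ RuleKind.defeater ∧ r.head = q}

/-- R_d[q]: defeasible rules with head q. -/
def DTheory.Rd (D : DTheory) (q : Lit) : Set Rule :=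
  {r | r ∈ D.rules ∧ r.kind = RuleKind.defeasible ∧ r.head = q}

/-- R[q]: all rules with head q. -/
def DTheory.Rall (D : DTheory) (q : Lit) : Set Rule :=
  {r | r ∈ D.rules ∧ r.head = q}

/-- The rules used for defeasible provability (tags ±∂, ±σ): under separated
reasoning (`sep = true`) these are the defeasible rules R_d[q]; under the
standard interpretation (`sep = false`) they are R_sd[q]. -/
def DTheory.RD (D : DTheory) (sep : Bool) (q : Lit) : Set Rule :=
  if sep then D.Rd q else D.Rsd q

/-- `Step sep D S c` holds iff the tagged literal `c` may be appended to a
derivation in `D` whose set of preceding lines is `S`, by one of the inference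
rules (±Δ, ±∂, ±σ).  `sep` selects separated reasoning. -/
inductive Step (sep : Bool) (D : DTheory) (S : Set TaggedLit) : TaggedLit → Prop
  | plusDelta (q : Lit) :
      (q ∈ D.facts ∨ ∃ r ∈ D.Rs q, ∀ a ∈ r.body, TaggedLit.pDelta a ∈ S) →
      Step sep D S (TaggedLit.pDelta q)
  | minusDelta (q : Lit) :
      q ∉ D.facts →
      (∀ r ∈ D.Rs q, ∃ a ∈ r.body, TaggedLit.mDelta a ∈ S) →
      Step sep D S (TaggedLit.mDelta q)
  | plusPartial (q : Lit) :
      (TaggedLit.pDelta q ∈ S ∨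
        ((∃ r ∈ D.RD sep q, ∀ a ∈ r.body, TaggedLit.pPartial a ∈ S) ∧
         TaggedLit.mDelta q.compl ∈ S ∧
         (∀ s ∈ D.Rall q.compl,
            (∃ a ∈ s.body, TaggedLit.mPartial a ∈ S) ∨
            (∃ t ∈ D.RD sep q, D.sup t s ∧ ∀ a ∈ t.body, TaggedLit.pPartial a ∈ S)))) →
      Step sep D S (TaggedLit.pPartial q)
  | minusPartial (q : Lit) :
      TaggedLit.mDelta q ∈ S →
      ((∀ r ∈ D.RD sep q, ∃ a ∈ r.body, TaggedLit.mPartial a ∈ S) ∨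
       TaggedLit.pDelta q.compl ∈ S ∨
       (∃ s ∈ D.Rall q.compl,
          (∀ a ∈ s.body, TaggedLit.pPartial a ∈ S) ∧
          (∀ t ∈ D.RD sep q,
             (∃ a ∈ t.body, TaggedLit.mPartial a ∈ S) ∨ ¬ D.sup t s))) →
      Step sep D S (TaggedLit.mPartial q)
  | plusSigma (q : Lit) :
      (∃ r ∈ D.RD sep q, ∀ a ∈ r.body, TaggedLit.pPartial a ∈ S) →
      Step sep D S (TaggedLit.pSigma q)
  | minusSigma (q : Lit) :
      (∀ r ∈ D.RD sep q, ∃ a ∈ r.body, TaggedLit.mPartial a ∈ S) →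
      Step sep D S (TaggedLit.mSigma q)

/-- Derivations: finite sequences of tagged literals, each justified by its
predecessors via the inference rules. -/
inductive IsDerivation (sep : Bool) (D : DTheory) : List TaggedLit → Prop
  | nil : IsDerivation sep D []
  | snoc (P : List TaggedLit) (c : TaggedLit) :
      IsDerivation sep D P → Step sep D {x | x ∈ P} c →
      IsDerivation sep D (P ++ [c])

/-- D ⊢ c : the tagged literal c occurs in some derivation in D. -/
def Proves (sep : Bool) (D : DTheory) (c : TaggedLit) : Prop :=
  ∃ P, IsDerivation sep D P ∧ c ∈ P

/-- A basic defeasible theory: no defeaters and an empty superiority relation. -/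
def DTheory.Basic (D : DTheory) : Prop :=
  (∀ r ∈ D.rules, r.kind ≠ RuleKind.defeater) ∧ (∀ r s : Rule, ¬ D.sup r s)

/-- D has duplicated strict rules: every strict rule has a defeasible copy. -/
def DTheory.DupStrictRules (D : DTheory) : Prop :=
  ∀ r ∈ D.rules, r.kind = RuleKind.strict →
    Rule.mk r.body r.head RuleKind.defeasible ∈ D.rules

/-- The literals of the (finite) language of D: all literals over atoms
occurring in D. -/
def DTheory.lits (D : DTheory) : Set Lit :=
  {l | (∃ f ∈ D.facts, f.atom = l.atom) ∨
       ∃ r ∈ D.rules, r.head.atom = l.atom ∨ ∃ a ∈ r.body, a.atom = l.atom}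

/-- The transition system on states (D, C).  `L` is the set of literals of the
language of the original theory, over which q ranges in transitions (1)–(6). -/
inductive DLTrans (L : Set Lit) : DTheory × Set TaggedLit → DTheory × Set TaggedLit → Prop
  | t1 (D : DTheory) (C : Set TaggedLit) (q : Lit) :
      q ∈ L →
      (q ∈ D.facts ∨
        ∃ r ∈ D.rules, r.kind = RuleKind.strict ∧ r.head = q ∧ r.body = ∅) →
      DLTrans L (D, C)
        (D, C ∪ {TaggedLit.pDelta q, TaggedLit.pPartial q, TaggedLit.pSigma q})
  | t2 (D : DTheory) (C : Set TaggedLit) (q : Lit) :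
      q ∈ L →
      (∃ r ∈ D.rules, r.kind = RuleKind.defeasible ∧ r.head = q ∧ r.body = ∅) →
      DLTrans L (D, C) (D, insert (TaggedLit.pSigma q) C)
  | t3 (D : DTheory) (C : Set TaggedLit) (q : Lit) :
      q ∈ L →
      (∀ r ∈ D.rules, ¬(r.kind = RuleKind.strict ∧ r.head = q)) →
      q ∉ D.facts →
      DLTrans L (D, C) (D, insert (TaggedLit.mDelta q) C)
  | t4 (D : DTheory) (C : Set TaggedLit) (q : Lit) :
      q ∈ L →
      (∀ r ∈ D.rules, r.head ≠ q) →
      DLTrans L (D, C) (D, insert (TaggedLit.mSigma q) C)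
  | t5 (D : DTheory) (C : Set TaggedLit) (q : Lit) :
      q ∈ L →
      (TaggedLit.pDelta q ∈ C ∨
        (TaggedLit.pSigma q ∈ C ∧ TaggedLit.mDelta q.compl ∈ C ∧
         TaggedLit.mSigma q.compl ∈ C)) →
      DLTrans L (D, C) (D, insert (TaggedLit.pPartial q) C)
  | t6 (D : DTheory) (C : Set TaggedLit) (q : Lit) :
      q ∈ L →
      TaggedLit.mDelta q ∈ C →
      (TaggedLit.pDelta q.compl ∈ C ∨ TaggedLit.pSigma q.compl ∈ C ∨
       TaggedLit.mSigma q ∈ C) →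
      DLTrans L (D, C) (D, insert (TaggedLit.mPartial q) C)
  | t7 (D : DTheory) (C : Set TaggedLit) (r : Rule) (q : Lit) :
      r ∈ D.rules → r.kind = RuleKind.strict → q ∈ r.body →
      TaggedLit.pDelta q ∈ C →
      DLTrans L (D, C)
        (⟨D.facts, insert (Rule.mk (r.body.erase q) r.head r.kind) (D.rules.erase r),
          D.sup, D.sup_acyclic⟩, C)
  | t8 (D : DTheory) (C : Set TaggedLit) (r : Rule) (q : Lit) :
      r ∈ D.rules → r.kind = RuleKind.defeasible → q ∈ r.body →
      TaggedLit.pPartial q ∈ C →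
      DLTrans L (D, C)
        (⟨D.facts, insert (Rule.mk (r.body.erase q) r.head r.kind) (D.rules.erase r),
          D.sup, D.sup_acyclic⟩, C)
  | t9 (D : DTheory) (C : Set TaggedLit) (r : Rule) (q : Lit) :
      r ∈ D.rules → r.kind = RuleKind.strict → q ∈ r.body →
      TaggedLit.mDelta q ∈ C →
      DLTrans L (D, C) (⟨D.facts, D.rules.erase r, D.sup, D.sup_acyclic⟩, C)
  | t10 (D : DTheory) (C : Set TaggedLit) (r : Rule) (q : Lit) :
      r ∈ D.rules → r.kind = RuleKind.defeasible → q ∈ r.body →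
      TaggedLit.mPartial q ∈ C →
      DLTrans L (D, C) (⟨D.facts, D.rules.erase r, D.sup, D.sup_acyclic⟩, C)

/-- (D, C) ⟹̸ : every applicable transition leaves the state unchanged. -/
def Stuck (L : Set Lit) (s : DTheory × Set TaggedLit) : Prop :=
  ∀ s', DLTrans L s s' → s' = s

/-- D derives C: some transition sequence from (D, ∅) reaches a stuck state
(D', C'), and C is the set of members of C' with tags among +Δ, −Δ, +∂, −∂. -/
def Derives (D : DTheory) (C : Set TaggedLit) : Prop :=
  ∃ D' C', Relation.ReflTransGen (DLTrans D.lits) (D, (∅ : Set TaggedLit)) (D', C') ∧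
    Stuck D.lits (D', C') ∧
    C = {c | c ∈ C' ∧ c.IsConclusionTag}

namespace DLAux

open TaggedLit

theorem RD_true (D : DTheory) (q : Lit) : D.RD true q = D.Rd q := rfl

theorem step_mono {D : DTheory} {S S' : Set TaggedLit} (h : S ⊆ S') {c : TaggedLit}
    (hs : Step true D S c) : Step true D S' c := by
  cases hs with
  | plusDelta q h1 =>
      refine .plusDelta q ?_
      rcases h1 with hf | ⟨r, hr, hb⟩
      · exact Or.inl hf
      · exact Or.inr ⟨r, hr, fun a ha => h (hb a ha)⟩
  | minusDelta q h1 h2 =>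
      refine .minusDelta q h1 (fun r hr => ?_)
      obtain ⟨a, ha, hm⟩ := h2 r hr; exact ⟨a, ha, h hm⟩
  | plusPartial q h1 =>
      refine .plusPartial q ?_
      rcases h1 with h1 | ⟨⟨r, hr, hb⟩, hm, hatt⟩
      · exact Or.inl (h h1)
      · refine Or.inr ⟨⟨r, hr, fun a ha => h (hb a ha)⟩, h hm, fun s hs => ?_⟩
        rcases hatt s hs with ⟨a, ha, hma⟩ | ⟨t, ht, hts, htb⟩
        · exact Or.inl ⟨a, ha, h hma⟩
        · exact Or.inr ⟨t, ht, hts, fun a ha => h (htb a ha)⟩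
  | minusPartial q hmd hcl =>
      refine .minusPartial q (h hmd) ?_
      rcases hcl with h1 | h1 | ⟨s, hs, hsb, hst⟩
      · refine Or.inl (fun r hr => ?_)
        obtain ⟨a, ha, hm⟩ := h1 r hr; exact ⟨a, ha, h hm⟩
      · exact Or.inr (Or.inl (h h1))
      · refine Or.inr (Or.inr ⟨s, hs, fun a ha => h (hsb a ha), fun t ht => ?_⟩)
        rcases hst t ht with ⟨a, ha, hm⟩ | hns
        · exact Or.inl ⟨a, ha, h hm⟩
        · exact Or.inr hns
  | plusSigma q h1 =>
      obtain ⟨r, hr, hb⟩ := h1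
      exact .plusSigma q ⟨r, hr, fun a ha => h (hb a ha)⟩
  | minusSigma q h1 =>
      refine .minusSigma q (fun r hr => ?_)
      obtain ⟨a, ha, hm⟩ := h1 r hr; exact ⟨a, ha, h hm⟩

theorem deriv_append {D : DTheory} {P Q : List TaggedLit}
    (hP : IsDerivation true D P) (hQ : IsDerivation true D Q) :
    IsDerivation true D (P ++ Q) := by
  induction hQ with
  | nil => simpa using hP
  | snoc Q c hQ hstep ih =>
      rw [← List.append_assoc]
      exact .snoc _ c ih (step_mono (fun x hx => List.mem_append.2 (Or.inr hx)) hstep)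

theorem proves_of_mem {D : DTheory} {P : List TaggedLit} (hP : IsDerivation true D P)
    {c : TaggedLit} (hc : c ∈ P) : Proves true D c := ⟨P, hP, hc⟩

/-- Combine provability facts over a finite index set into one derivation. -/
theorem exists_deriv_finset {D : DTheory} {α : Type*} [DecidableEq α] (s : Finset α)
    (R : α → Set TaggedLit → Prop)
    (hmono : ∀ a {S S' : Set TaggedLit}, S ⊆ S' → R a S → R a S')
    (h : ∀ a ∈ s, ∃ P, IsDerivation true D P ∧ R a {x | x ∈ P}) :
    ∃ P, IsDerivation true D P ∧ ∀ a ∈ s, R a {x | x ∈ P} := by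
  classical
  induction s using Finset.induction with
  | empty => exact ⟨[], .nil, by simp⟩
  | @insert a s ha ih =>
      obtain ⟨P, hP, hPR⟩ := ih (fun b hb => h b (Finset.mem_insert_of_mem hb))
      obtain ⟨Q, hQ, hQR⟩ := h a (Finset.mem_insert_self a s)
      refine ⟨P ++ Q, deriv_append hP hQ, ?_⟩
      intro b hb
      rcases Finset.mem_insert.1 hb with rfl | hb
      · exact hmono b (fun x hx => List.mem_append.2 (Or.inr hx)) hQR
      · exact hmono b (fun x hx => List.mem_append.2 (Or.inl hx)) (hPR b hb)

/-- Provability of a single step conclusion from premise-wise provability,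
for basic theories. -/
theorem closure {D : DTheory} (hB : D.Basic) {c : TaggedLit}
    (h : Step true D {x | Proves true D x} c) : Proves true D c := by
  classical
  cases h with
  | plusDelta q h1 =>
      rcases h1 with hf | ⟨r, hr, hb⟩
      · exact ⟨[pDelta q], .snoc [] _ .nil (.plusDelta q (Or.inl hf)), by simp⟩
      · obtain ⟨P, hP, hPR⟩ := exists_deriv_finset (D := D) r.body
          (fun a S => pDelta a ∈ S) (fun a S S' hss hm => hss hm)
          (fun a ha => by
            obtain ⟨Q, hQ, hc⟩ := hb a ha
            exact ⟨Q, hQ, hc⟩)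
        refine ⟨P ++ [pDelta q], .snoc P _ hP (.plusDelta q (Or.inr ⟨r, hr, hPR⟩)), by simp⟩
  | minusDelta q h1 h2 =>
      obtain ⟨P, hP, hPR⟩ := exists_deriv_finset (D := D) D.rules
        (fun r S => (r.kind = RuleKind.strict ∧ r.head = q) → ∃ a ∈ r.body, mDelta a ∈ S)
        (fun r S S' hss hm hk => (hm hk).imp (fun a => And.imp_right fun h => hss h))
        (fun r hr => by
          by_cases hk : r.kind = RuleKind.strict ∧ r.head = q
          · obtain ⟨a, ha, Q, hQ, hc⟩ := h2 r ⟨hr, hk.1, hk.2⟩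
            exact ⟨Q, hQ, fun _ => ⟨a, ha, hc⟩⟩
          · exact ⟨[], .nil, fun hk' => absurd hk' hk⟩)
      refine ⟨P ++ [mDelta q], .snoc P _ hP (.minusDelta q h1 ?_), by simp⟩
      rintro r ⟨hr, hk, hh⟩
      exact hPR r hr ⟨hk, hh⟩
  | plusPartial q h1 =>
      rcases h1 with ⟨Q, hQ, hc⟩ | ⟨⟨r, hr, hb⟩, ⟨Qm, hQm, hcm⟩, hatt⟩
      · exact ⟨Q ++ [pPartial q], .snoc Q _ hQ (.plusPartial q (Or.inl hc)), by simp⟩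
      · obtain ⟨P1, hP1, hP1R⟩ := exists_deriv_finset (D := D) r.body
          (fun a S => pPartial a ∈ S) (fun a S S' hss hm => hss hm) (fun a ha => hb a ha)
        obtain ⟨P3, hP3, hP3R⟩ := exists_deriv_finset (D := D) D.rules
          (fun s S => s.head = q.compl → ∃ a ∈ s.body, mPartial a ∈ S)
          (fun s S S' hss hm hk => (hm hk).imp (fun a => And.imp_right fun h => hss h))
          (fun s hs => by
            by_cases hh : s.head = q.compl
            · rcases hatt s ⟨hs, hh⟩ with ⟨a, ha, Q, hQ, hc⟩ | ⟨t, _, hsup, _⟩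
              · exact ⟨Q, hQ, fun _ => ⟨a, ha, hc⟩⟩
              · exact absurd hsup (hB.2 t s)
            · exact ⟨[], .nil, fun hh' => absurd hh' hh⟩)
        refine ⟨(P1 ++ Qm ++ P3) ++ [pPartial q], .snoc _ _
          (deriv_append (deriv_append hP1 hQm) hP3) (.plusPartial q (Or.inr ⟨⟨r, hr, ?_⟩, ?_, ?_⟩)),
          by simp⟩
        · intro a ha
          simp only [Set.mem_setOf_eq, List.mem_append]
          exact Or.inl (Or.inl (hP1R a ha))
        · simp only [Set.mem_setOf_eq, List.mem_append]
          exact Or.inl (Or.inr hcm)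
        · rintro s ⟨hs, hh⟩
          obtain ⟨a, ha, hc⟩ := hP3R s hs hh
          refine Or.inl ⟨a, ha, ?_⟩
          simp only [Set.mem_setOf_eq, List.mem_append]
          exact Or.inr hc
  | minusPartial q hmd hcl =>
      obtain ⟨Q0, hQ0, hc0⟩ := hmd
      rcases hcl with h1 | h1 | h1
      · obtain ⟨P, hP, hPR⟩ := exists_deriv_finset (D := D) D.rules
          (fun r S => (r.kind = RuleKind.defeasible ∧ r.head = q) → ∃ a ∈ r.body, mPartial a ∈ S)
          (fun r S S' hss hm hk => (hm hk).imp (fun a => And.imp_right fun h => hss h))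
          (fun r hr => by
            by_cases hk : r.kind = RuleKind.defeasible ∧ r.head = q
            · obtain ⟨a, ha, Q, hQ, hc⟩ := h1 r ⟨hr, hk.1, hk.2⟩
              exact ⟨Q, hQ, fun _ => ⟨a, ha, hc⟩⟩
            · exact ⟨[], .nil, fun hk' => absurd hk' hk⟩)
        refine ⟨(Q0 ++ P) ++ [mPartial q], .snoc _ _ (deriv_append hQ0 hP)
          (.minusPartial q ?_ (Or.inl ?_)), by simp⟩
        · simp only [Set.mem_setOf_eq, List.mem_append]; exact Or.inl hc0
        · rintro r ⟨hr, hk, hh⟩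
          obtain ⟨a, ha, hc⟩ := hPR r hr ⟨hk, hh⟩
          refine ⟨a, ha, ?_⟩
          simp only [Set.mem_setOf_eq, List.mem_append]; exact Or.inr hc
      · obtain ⟨Q1, hQ1, hc1⟩ := h1
        refine ⟨(Q0 ++ Q1) ++ [mPartial q], .snoc _ _ (deriv_append hQ0 hQ1)
          (.minusPartial q ?_ (Or.inr (Or.inl ?_))), by simp⟩
        · simp only [Set.mem_setOf_eq, List.mem_append]; exact Or.inl hc0
        · simp only [Set.mem_setOf_eq, List.mem_append]; exact Or.inr hc1
      · obtain ⟨s, hs, hsb, _⟩ := h1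
        obtain ⟨P1, hP1, hP1R⟩ := exists_deriv_finset (D := D) s.body
          (fun a S => pPartial a ∈ S) (fun a S S' hss hm => hss hm) (fun a ha => hsb a ha)
        refine ⟨(Q0 ++ P1) ++ [mPartial q], .snoc _ _ (deriv_append hQ0 hP1)
          (.minusPartial q ?_ (Or.inr (Or.inr ⟨s, hs, ?_, ?_⟩))), by simp⟩
        · simp only [Set.mem_setOf_eq, List.mem_append]; exact Or.inl hc0
        · intro a ha
          simp only [Set.mem_setOf_eq, List.mem_append]; exact Or.inr (hP1R a ha)
        · intro t _; exact Or.inr (hB.2 t s)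
  | plusSigma q h1 =>
      obtain ⟨r, hr, hb⟩ := h1
      obtain ⟨P, hP, hPR⟩ := exists_deriv_finset (D := D) r.body
        (fun a S => pPartial a ∈ S) (fun a S S' hss hm => hss hm) (fun a ha => hb a ha)
      exact ⟨P ++ [pSigma q], .snoc P _ hP (.plusSigma q ⟨r, hr, hPR⟩), by simp⟩
  | minusSigma q h1 =>
      obtain ⟨P, hP, hPR⟩ := exists_deriv_finset (D := D) D.rules
        (fun r S => (r.kind = RuleKind.defeasible ∧ r.head = q) → ∃ a ∈ r.body, mPartial a ∈ S)
        (fun r S S' hss hm hk => (hm hk).imp (fun a => And.imp_right fun h => hss h))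
        (fun r hr => by
          by_cases hk : r.kind = RuleKind.defeasible ∧ r.head = q
          · obtain ⟨a, ha, Q, hQ, hc⟩ := h1 r ⟨hr, hk.1, hk.2⟩
            exact ⟨Q, hQ, fun _ => ⟨a, ha, hc⟩⟩
          · exact ⟨[], .nil, fun hk' => absurd hk' hk⟩)
      refine ⟨P ++ [mSigma q], .snoc P _ hP (.minusSigma q ?_), by simp⟩
      rintro r ⟨hr, hk, hh⟩
      exact hPR r hr ⟨hk, hh⟩

/-! ### Approximation chain, inversion, coherence -/

def chain (D : DTheory) : ℕ → Set TaggedLit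
  | 0 => ∅
  | n+1 => chain D n ∪ {c | Step true D (chain D n) c}

theorem chain_succ_subset (D : DTheory) (n : ℕ) : chain D n ⊆ chain D (n+1) :=
  Set.subset_union_left

theorem chain_mono (D : DTheory) {m n : ℕ} (h : m ≤ n) : chain D m ⊆ chain D n := by
  induction h with
  | refl => exact subset_rfl
  | step _ ih => exact ih.trans (chain_succ_subset D _)

theorem chain_step {D : DTheory} {n : ℕ} {c : TaggedLit} (h : c ∈ chain D (n+1)) :
    Step true D (chain D n) c := by
  induction n with
  | zero =>
      rcases h with h | h
      · exact absurd h (Set.notMem_empty c)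
      · exact h
  | succ n ih =>
      rcases h with h | h
      · exact step_mono (chain_succ_subset D n) (ih h)
      · exact h

theorem deriv_subset_chain {D : DTheory} {P : List TaggedLit} (hP : IsDerivation true D P) :
    {x | x ∈ P} ⊆ chain D P.length := by
  induction hP with
  | nil => simp
  | snoc P c hP hstep ih =>
      intro x hx
      have hlen : (P ++ [c]).length = P.length + 1 := by simp
      rw [hlen]
      rcases List.mem_append.1 hx with hx | hx
      · exact chain_succ_subset D _ (ih hx)
      · have : x = c := by simpa using hx
        subst this
        exact Or.inr (step_mono ih hstep)

theorem chain_subset_proves {D : DTheory} (hB : D.Basic) (n : ℕ) :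
    chain D n ⊆ {x | Proves true D x} := by
  induction n with
  | zero => simp [chain]
  | succ n ih =>
      rintro x (hx | hx)
      · exact ih hx
      · exact closure hB (step_mono ih hx)

theorem proves_iff_chain {D : DTheory} (hB : D.Basic) {c : TaggedLit} :
    Proves true D c ↔ ∃ n, c ∈ chain D n := by
  constructor
  · rintro ⟨P, hP, hc⟩
    exact ⟨P.length, deriv_subset_chain hP hc⟩
  · rintro ⟨n, hn⟩
    exact chain_subset_proves hB n hn

/-- Inversion: every provable tagged literal is the conclusion of a step whose
premises are provable. -/
theorem proves_step {D : DTheory} (hB : D.Basic) {c : TaggedLit} (h : Proves true D c) :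
    Step true D {x | Proves true D x} c := by
  obtain ⟨n, hn⟩ := (proves_iff_chain hB).1 h
  match n, hn with
  | n+1, hn => exact step_mono (chain_subset_proves hB n) (chain_step hn)

theorem chain_coherent {D : DTheory} (hB : D.Basic) :
    ∀ n, (∀ q : Lit, ¬(pDelta q ∈ chain D n ∧ mDelta q ∈ chain D n)) ∧
         (∀ q : Lit, ¬(pPartial q ∈ chain D n ∧ mPartial q ∈ chain D n)) := by
  intro n
  induction n with
  | zero => simp [chain]
  | succ n ih =>
      obtain ⟨ihD, ihP⟩ := ih
      constructor
      · rintro q ⟨hp, hm⟩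
        have hp' := chain_step hp
        have hm' := chain_step hm
        cases hp' with
        | plusDelta q h1 =>
        cases hm' with
        | minusDelta q hnf hall =>
        rcases h1 with hf | ⟨r, hr, hb⟩
        · exact hnf hf
        · obtain ⟨a, ha, hma⟩ := hall r hr
          exact ihD a ⟨hb a ha, hma⟩
      · rintro q ⟨hp, hm⟩
        have hp' := chain_step hp
        have hm' := chain_step hm
        cases hp' with
        | plusPartial q h1 =>
        cases hm' with
        | minusPartial q hmd hcl =>
        rcases h1 with h1 | ⟨⟨r, hr, hb⟩, hmc, hatt⟩
        · exact ihD q ⟨h1, hmd⟩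
        · rcases hcl with h2 | h2 | ⟨s, hs, hsb, hst⟩
          · obtain ⟨a, ha, hma⟩ := h2 r hr
            exact ihP a ⟨hb a ha, hma⟩
          · exact ihD q.compl ⟨h2, hmc⟩
          · rcases hatt s hs with ⟨a, ha, hma⟩ | ⟨t, _, hsup, _⟩
            · exact ihP a ⟨hsb a ha, hma⟩
            · exact hB.2 t s hsup

theorem coherent_delta {D : DTheory} (hB : D.Basic) (q : Lit) :
    ¬(Proves true D (pDelta q) ∧ Proves true D (mDelta q)) := by
  rintro ⟨hp, hm⟩
  obtain ⟨n, hn⟩ := (proves_iff_chain hB).1 hp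
  obtain ⟨m, hm'⟩ := (proves_iff_chain hB).1 hm
  exact (chain_coherent hB (max n m)).1 q
    ⟨chain_mono D (le_max_left n m) hn, chain_mono D (le_max_right n m) hm'⟩

theorem coherent_partial {D : DTheory} (hB : D.Basic) (q : Lit) :
    ¬(Proves true D (pPartial q) ∧ Proves true D (mPartial q)) := by
  rintro ⟨hp, hm⟩
  obtain ⟨n, hn⟩ := (proves_iff_chain hB).1 hp
  obtain ⟨m, hm'⟩ := (proves_iff_chain hB).1 hm
  exact (chain_coherent hB (max n m)).2 q
    ⟨chain_mono D (le_max_left n m) hn, chain_mono D (le_max_right n m) hm'⟩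

theorem provesP {D : DTheory} (hB : D.Basic) {q : Lit} (h : Proves true D (pDelta q)) :
    Proves true D (pPartial q) :=
  closure hB (.plusPartial q (Or.inl h))

/-! ### Transfer framework -/

theorem transfer_main {X Y : DTheory}
    (h : ∀ {S : Set TaggedLit} {c : TaggedLit}, Step true X S c →
      S ⊆ {x | Proves true Y x} → Proves true Y c) :
    ∀ c : TaggedLit, Proves true X c → Proves true Y c := by
  have key : ∀ P, IsDerivation true X P → ∀ x ∈ P, Proves true Y x := by
    intro P hP
    induction hP with
    | nil => simp
    | snoc P c hP hstep ih =>
        intro x hx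
        rcases List.mem_append.1 hx with hx | hx
        · exact ih x hx
        · have : x = c := by simpa using hx
          subst this
          exact h hstep (fun y hy => ih y hy)
  rintro c ⟨P, hP, hc⟩
  exact key P hP c hc

theorem delta_transfer {X Y : DTheory}
    (hP : ∀ {S : Set TaggedLit} {q : Lit}, Step true X S (TaggedLit.pDelta q) →
        (∀ a, TaggedLit.pDelta a ∈ S → Proves true Y (TaggedLit.pDelta a)) →
        (∀ a, TaggedLit.mDelta a ∈ S → Proves true Y (TaggedLit.mDelta a)) →
        Proves true Y (TaggedLit.pDelta q))
    (hM : ∀ {S : Set TaggedLit} {q : Lit}, Step true X S (TaggedLit.mDelta q) →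
        (∀ a, TaggedLit.pDelta a ∈ S → Proves true Y (TaggedLit.pDelta a)) →
        (∀ a, TaggedLit.mDelta a ∈ S → Proves true Y (TaggedLit.mDelta a)) →
        Proves true Y (TaggedLit.mDelta q)) :
    (∀ q, Proves true X (TaggedLit.pDelta q) → Proves true Y (TaggedLit.pDelta q)) ∧
    (∀ q, Proves true X (TaggedLit.mDelta q) → Proves true Y (TaggedLit.mDelta q)) := by
  suffices H : ∀ P, IsDerivation true X P →
      (∀ q, TaggedLit.pDelta q ∈ P → Proves true Y (TaggedLit.pDelta q)) ∧
      (∀ q, TaggedLit.mDelta q ∈ P → Proves true Y (TaggedLit.mDelta q)) by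
    constructor
    · rintro q ⟨P, hPd, hc⟩; exact (H P hPd).1 q hc
    · rintro q ⟨P, hPd, hc⟩; exact (H P hPd).2 q hc
  intro P hPd
  induction hPd with
  | nil => simp
  | snoc P c hPd hstep ih =>
      obtain ⟨ih1, ih2⟩ := ih
      constructor
      · intro q hq
        rcases List.mem_append.1 hq with hq | hq
        · exact ih1 q hq
        · have : TaggedLit.pDelta q = c := by simpa using hq
          subst this
          exact hP hstep (fun a ha => ih1 a ha) (fun a ha => ih2 a ha)
      · intro q hq
        rcases List.mem_append.1 hq with hq | hq
        · exact ih2 q hq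
        · have : TaggedLit.mDelta q = c := by simpa using hq
          subst this
          exact hM hstep (fun a ha => ih1 a ha) (fun a ha => ih2 a ha)

/-! ### The modified and reduced theories -/

def modTheory (E : DTheory) (r : Rule) (q : Lit) : DTheory :=
  ⟨E.facts, insert (Rule.mk (r.body.erase q) r.head r.kind) (E.rules.erase r),
    E.sup, E.sup_acyclic⟩

def delTheory (E : DTheory) (r : Rule) : DTheory :=
  ⟨E.facts, E.rules.erase r, E.sup, E.sup_acyclic⟩

theorem mem_mod {E : DTheory} {r e : Rule} {q : Lit} :
    e ∈ (modTheory E r q).rules ↔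
      e = Rule.mk (r.body.erase q) r.head r.kind ∨ (e ∈ E.rules ∧ e ≠ r) := by
  simp [modTheory, Finset.mem_insert, Finset.mem_erase, and_comm]

theorem mem_del {E : DTheory} {r e : Rule} :
    e ∈ (delTheory E r).rules ↔ e ∈ E.rules ∧ e ≠ r := by
  simp [delTheory, Finset.mem_erase, and_comm]

theorem basic_mod {E : DTheory} {r : Rule} {q : Lit} (hB : E.Basic) (hr : r ∈ E.rules) :
    (modTheory E r q).Basic := by
  refine ⟨?_, hB.2⟩
  intro e he
  rcases mem_mod.1 he with rfl | ⟨heE, _⟩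
  · exact hB.1 r hr
  · exact hB.1 e heE

theorem basic_del {E : DTheory} {r : Rule} (hB : E.Basic) : (delTheory E r).Basic :=
  ⟨fun e he => hB.1 e (mem_del.1 he).1, hB.2⟩

/-- Shadow property: every strict rule has a defeasible shadow (modulo
definitely provable body literals), or is blocked. -/
def ShadowOn (E : DTheory) (T : Set TaggedLit) : Prop :=
  ∀ s ∈ E.rules, s.kind = RuleKind.strict →
    (∃ d ∈ E.rules, d.kind = RuleKind.defeasible ∧ d.head = s.head ∧
       ∀ a ∈ d.body, a ∈ s.body ∨ TaggedLit.pDelta a ∈ T) ∨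
    (∃ a ∈ s.body, TaggedLit.mPartial a ∈ T)

theorem mem_Rs {D : DTheory} {q : Lit} {e : Rule} :
    e ∈ D.Rs q ↔ e ∈ D.rules ∧ e.kind = RuleKind.strict ∧ e.head = q := Iff.rfl

theorem mem_RD {D : DTheory} {q : Lit} {e : Rule} :
    e ∈ D.RD true q ↔ e ∈ D.rules ∧ e.kind = RuleKind.defeasible ∧ e.head = q := Iff.rfl

theorem mem_Rall {D : DTheory} {q : Lit} {e : Rule} :
    e ∈ D.Rall q ↔ e ∈ D.rules ∧ e.head = q := Iff.rfl

theorem sd_ne : RuleKind.strict ≠ RuleKind.defeasible := by decide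

/-! ### Transition 7: shrinking a strict rule -/

section T7
variable {E : DTheory} {r : Rule} {q : Lit}

theorem t7_A (hB : E.Basic) (hr : r ∈ E.rules) (hk : r.kind = RuleKind.strict)
    (hq : q ∈ r.body) (hpq : Proves true E (TaggedLit.pDelta q)) :
    ∀ c : TaggedLit, Proves true (modTheory E r q) c → Proves true E c := by
  refine transfer_main ?_
  intro S c hstep hsub
  refine closure hB ?_
  cases hstep with
  | plusDelta q₀ h1 =>
      refine .plusDelta q₀ ?_
      rcases h1 with hf | ⟨e, he, hb⟩
      · exact Or.inl hf
      · obtain ⟨he1, he2, he3⟩ := mem_Rs.1 he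
        rcases mem_mod.1 he1 with rfl | ⟨heE, hne⟩
        · refine Or.inr ⟨r, mem_Rs.2 ⟨hr, hk, he3⟩, ?_⟩
          intro a ha
          by_cases haq : a = q
          · subst haq; exact hpq
          · exact hsub (hb a (Finset.mem_erase_of_ne_of_mem haq ha))
        · exact Or.inr ⟨e, mem_Rs.2 ⟨heE, he2, he3⟩, fun a ha => hsub (hb a ha)⟩
  | minusDelta q₀ hnf h2 =>
      refine .minusDelta q₀ hnf ?_
      intro e he
      obtain ⟨he1, he2, he3⟩ := mem_Rs.1 he
      by_cases hce : e = r
      · subst hce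
        obtain ⟨a, ha, hma⟩ := h2 _ (mem_Rs.2 ⟨mem_mod.2 (Or.inl rfl), hk, he3⟩)
        exact ⟨a, Finset.mem_of_mem_erase ha, hsub hma⟩
      · obtain ⟨a, ha, hma⟩ := h2 e (mem_Rs.2 ⟨mem_mod.2 (Or.inr ⟨he1, hce⟩), he2, he3⟩)
        exact ⟨a, ha, hsub hma⟩
  | plusPartial q₀ h1 =>
      refine .plusPartial q₀ ?_
      rcases h1 with h1 | ⟨⟨e, he, hb⟩, hmc, hatt⟩
      · exact Or.inl (hsub h1)
      · obtain ⟨he1, he2, he3⟩ := mem_RD.1 he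
        have heE : e ∈ E.rules := by
          rcases mem_mod.1 he1 with rfl | ⟨heE, _⟩
          · exact absurd (hk.symm.trans he2) sd_ne
          · exact heE
        refine Or.inr ⟨⟨e, mem_RD.2 ⟨heE, he2, he3⟩, fun a ha => hsub (hb a ha)⟩,
          hsub hmc, ?_⟩
        intro s hs
        obtain ⟨hsE, hsh⟩ := mem_Rall.1 hs
        by_cases hcs : s = r
        · subst hcs
          rcases hatt _ (mem_Rall.2 ⟨mem_mod.2 (Or.inl rfl), hsh⟩) with
            ⟨a, ha, hma⟩ | ⟨t, _, hsup, _⟩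
          · exact Or.inl ⟨a, Finset.mem_of_mem_erase ha, hsub hma⟩
          · exact absurd hsup (hB.2 t _)
        · rcases hatt s (mem_Rall.2 ⟨mem_mod.2 (Or.inr ⟨hsE, hcs⟩), hsh⟩) with
            ⟨a, ha, hma⟩ | ⟨t, _, hsup, _⟩
          · exact Or.inl ⟨a, ha, hsub hma⟩
          · exact absurd hsup (hB.2 t s)
  | minusPartial q₀ hmd hcl =>
      refine .minusPartial q₀ (hsub hmd) ?_
      rcases hcl with h1 | h1 | ⟨s, hs, hsb, _⟩
      · refine Or.inl ?_
        intro e he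
        obtain ⟨he1, he2, he3⟩ := mem_RD.1 he
        have hne : e ≠ r := fun hc => absurd ((hc ▸ hk).symm.trans he2) sd_ne
        obtain ⟨a, ha, hma⟩ := h1 e (mem_RD.2 ⟨mem_mod.2 (Or.inr ⟨he1, hne⟩), he2, he3⟩)
        exact ⟨a, ha, hsub hma⟩
      · exact Or.inr (Or.inl (hsub h1))
      · refine Or.inr (Or.inr ?_)
        obtain ⟨hs1, hs2⟩ := mem_Rall.1 hs
        rcases mem_mod.1 hs1 with rfl | ⟨hsE, hns⟩
        · refine ⟨r, mem_Rall.2 ⟨hr, hs2⟩, ?_, fun t _ => Or.inr (hB.2 t r)⟩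
          intro a ha
          by_cases haq : a = q
          · subst haq; exact provesP hB hpq
          · exact hsub (hsb a (Finset.mem_erase_of_ne_of_mem haq ha))
        · exact ⟨s, mem_Rall.2 ⟨hsE, hs2⟩, fun a ha => hsub (hsb a ha),
            fun t _ => Or.inr (hB.2 t s)⟩
  | plusSigma q₀ h1 =>
      obtain ⟨e, he, hb⟩ := h1
      obtain ⟨he1, he2, he3⟩ := mem_RD.1 he
      have heE : e ∈ E.rules := by
        rcases mem_mod.1 he1 with rfl | ⟨heE, _⟩
        · exact absurd (hk.symm.trans he2) sd_ne
        · exact heE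
      exact .plusSigma q₀ ⟨e, mem_RD.2 ⟨heE, he2, he3⟩, fun a ha => hsub (hb a ha)⟩
  | minusSigma q₀ h1 =>
      refine .minusSigma q₀ ?_
      intro e he
      obtain ⟨he1, he2, he3⟩ := mem_RD.1 he
      have hne : e ≠ r := fun hc => absurd ((hc ▸ hk).symm.trans he2) sd_ne
      obtain ⟨a, ha, hma⟩ := h1 e (mem_RD.2 ⟨mem_mod.2 (Or.inr ⟨he1, hne⟩), he2, he3⟩)
      exact ⟨a, ha, hsub hma⟩

theorem t7_delta (hB : E.Basic) (hr : r ∈ E.rules) (hk : r.kind = RuleKind.strict)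
    (hq : q ∈ r.body) (hpq : Proves true E (TaggedLit.pDelta q)) :
    (∀ q₀, Proves true E (TaggedLit.pDelta q₀) →
      Proves true (modTheory E r q) (TaggedLit.pDelta q₀)) ∧
    (∀ q₀, Proves true E (TaggedLit.mDelta q₀) →
      Proves true (modTheory E r q) (TaggedLit.mDelta q₀)) := by
  have hB' := basic_mod (q := q) hB hr
  have hA := t7_A hB hr hk hq hpq
  refine delta_transfer ?_ ?_
  · intro S q₀ hstep hΔp hΔm
    cases hstep with
    | plusDelta q₀ h1 =>
        refine closure hB' (.plusDelta q₀ ?_)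
        rcases h1 with hf | ⟨e, he, hb⟩
        · exact Or.inl hf
        · obtain ⟨he1, he2, he3⟩ := mem_Rs.1 he
          by_cases hce : e = r
          · subst hce
            refine Or.inr ⟨_, mem_Rs.2 ⟨mem_mod.2 (Or.inl rfl), hk, he3⟩, ?_⟩
            intro a ha
            exact hΔp a (hb a (Finset.mem_of_mem_erase ha))
          · exact Or.inr ⟨e, mem_Rs.2 ⟨mem_mod.2 (Or.inr ⟨he1, hce⟩), he2, he3⟩,
              fun a ha => hΔp a (hb a ha)⟩
  · intro S q₀ hstep hΔp hΔm
    cases hstep with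
    | minusDelta q₀ hnf h2 =>
        refine closure hB' (.minusDelta q₀ hnf ?_)
        intro e he
        obtain ⟨he1, he2, he3⟩ := mem_Rs.1 he
        rcases mem_mod.1 he1 with rfl | ⟨heE, hne⟩
        · obtain ⟨a, ha, hma⟩ := h2 r (mem_Rs.2 ⟨hr, hk, he3⟩)
          have haq : a ≠ q := by
            rintro rfl
            exact coherent_delta hB a ⟨hpq, hA _ (hΔm a hma)⟩
          exact ⟨a, Finset.mem_erase_of_ne_of_mem haq ha, hΔm a hma⟩
        · obtain ⟨a, ha, hma⟩ := h2 e (mem_Rs.2 ⟨heE, he2, he3⟩)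
          exact ⟨a, ha, hΔm a hma⟩

theorem t7_B (hB : E.Basic) (hr : r ∈ E.rules) (hk : r.kind = RuleKind.strict)
    (hq : q ∈ r.body) (hpq : Proves true E (TaggedLit.pDelta q)) :
    ∀ c : TaggedLit, Proves true E c → Proves true (modTheory E r q) c := by
  have hB' := basic_mod (q := q) hB hr
  have hA := t7_A hB hr hk hq hpq
  have hΔ := t7_delta hB hr hk hq hpq
  refine transfer_main ?_
  intro S c hstep hsub
  refine closure hB' ?_
  cases hstep with
  | plusDelta q₀ h1 =>
      refine .plusDelta q₀ ?_
      rcases h1 with hf | ⟨e, he, hb⟩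
      · exact Or.inl hf
      · obtain ⟨he1, he2, he3⟩ := mem_Rs.1 he
        by_cases hce : e = r
        · subst hce
          exact Or.inr ⟨_, mem_Rs.2 ⟨mem_mod.2 (Or.inl rfl), hk, he3⟩,
            fun a ha => hsub (hb a (Finset.mem_of_mem_erase ha))⟩
        · exact Or.inr ⟨e, mem_Rs.2 ⟨mem_mod.2 (Or.inr ⟨he1, hce⟩), he2, he3⟩,
            fun a ha => hsub (hb a ha)⟩
  | minusDelta q₀ hnf h2 =>
      refine .minusDelta q₀ hnf ?_
      intro e he
      obtain ⟨he1, he2, he3⟩ := mem_Rs.1 he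
      rcases mem_mod.1 he1 with rfl | ⟨heE, hne⟩
      · obtain ⟨a, ha, hma⟩ := h2 r (mem_Rs.2 ⟨hr, hk, he3⟩)
        have haq : a ≠ q := by
          rintro rfl
          exact coherent_delta hB a ⟨hpq, hA _ (hsub hma)⟩
        exact ⟨a, Finset.mem_erase_of_ne_of_mem haq ha, hsub hma⟩
      · obtain ⟨a, ha, hma⟩ := h2 e (mem_Rs.2 ⟨heE, he2, he3⟩)
        exact ⟨a, ha, hsub hma⟩
  | plusPartial q₀ h1 =>
      refine .plusPartial q₀ ?_
      rcases h1 with h1 | ⟨⟨e, he, hb⟩, hmc, hatt⟩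
      · exact Or.inl (hsub h1)
      · obtain ⟨he1, he2, he3⟩ := mem_RD.1 he
        have hne : e ≠ r := fun hc => absurd ((hc ▸ hk).symm.trans he2) sd_ne
        refine Or.inr ⟨⟨e, mem_RD.2 ⟨mem_mod.2 (Or.inr ⟨he1, hne⟩), he2, he3⟩,
          fun a ha => hsub (hb a ha)⟩, hsub hmc, ?_⟩
        intro s hs
        obtain ⟨hs1, hs2⟩ := mem_Rall.1 hs
        rcases mem_mod.1 hs1 with rfl | ⟨hsE, hns⟩
        · rcases hatt r (mem_Rall.2 ⟨hr, hs2⟩) with ⟨a, ha, hma⟩ | ⟨t, _, hsup, _⟩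
          · have haq : a ≠ q := by
              rintro rfl
              exact coherent_partial hB' a ⟨provesP hB' (hΔ.1 a hpq), hsub hma⟩
            exact Or.inl ⟨a, Finset.mem_erase_of_ne_of_mem haq ha, hsub hma⟩
          · exact absurd hsup (hB.2 t r)
        · rcases hatt s (mem_Rall.2 ⟨hsE, hs2⟩) with ⟨a, ha, hma⟩ | ⟨t, _, hsup, _⟩
          · exact Or.inl ⟨a, ha, hsub hma⟩
          · exact absurd hsup (hB.2 t s)
  | minusPartial q₀ hmd hcl =>
      refine .minusPartial q₀ (hsub hmd) ?_
      rcases hcl with h1 | h1 | ⟨s, hs, hsb, _⟩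
      · refine Or.inl ?_
        intro e he
        obtain ⟨he1, he2, he3⟩ := mem_RD.1 he
        rcases mem_mod.1 he1 with rfl | ⟨heE, hne⟩
        · exact absurd (hk.symm.trans he2) sd_ne
        · obtain ⟨a, ha, hma⟩ := h1 e (mem_RD.2 ⟨heE, he2, he3⟩)
          exact ⟨a, ha, hsub hma⟩
      · exact Or.inr (Or.inl (hsub h1))
      · refine Or.inr (Or.inr ?_)
        obtain ⟨hs1, hs2⟩ := mem_Rall.1 hs
        by_cases hcs : s = r
        · subst hcs
          refine ⟨_, mem_Rall.2 ⟨mem_mod.2 (Or.inl rfl), hs2⟩, ?_,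
            fun t _ => Or.inr (hB.2 t _)⟩
          intro a ha
          exact hsub (hsb a (Finset.mem_of_mem_erase ha))
        · exact ⟨s, mem_Rall.2 ⟨mem_mod.2 (Or.inr ⟨hs1, hcs⟩), hs2⟩,
            fun a ha => hsub (hsb a ha), fun t _ => Or.inr (hB.2 t s)⟩
  | plusSigma q₀ h1 =>
      obtain ⟨e, he, hb⟩ := h1
      obtain ⟨he1, he2, he3⟩ := mem_RD.1 he
      have hne : e ≠ r := fun hc => absurd ((hc ▸ hk).symm.trans he2) sd_ne
      exact .plusSigma q₀ ⟨e, mem_RD.2 ⟨mem_mod.2 (Or.inr ⟨he1, hne⟩), he2, he3⟩,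
        fun a ha => hsub (hb a ha)⟩
  | minusSigma q₀ h1 =>
      refine .minusSigma q₀ ?_
      intro e he
      obtain ⟨he1, he2, he3⟩ := mem_RD.1 he
      rcases mem_mod.1 he1 with rfl | ⟨heE, hne⟩
      · exact absurd (hk.symm.trans he2) sd_ne
      · obtain ⟨a, ha, hma⟩ := h1 e (mem_RD.2 ⟨heE, he2, he3⟩)
        exact ⟨a, ha, hsub hma⟩

theorem t7_equiv (hB : E.Basic) (hr : r ∈ E.rules) (hk : r.kind = RuleKind.strict)
    (hq : q ∈ r.body) (hpq : Proves true E (TaggedLit.pDelta q)) :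
    ∀ c, Proves true E c ↔ Proves true (modTheory E r q) c :=
  fun c => ⟨t7_B hB hr hk hq hpq c, t7_A hB hr hk hq hpq c⟩

end T7

theorem ds_ne : RuleKind.defeasible ≠ RuleKind.strict := by decide

/-! ### Transition 8: shrinking a defeasible rule -/

section T8
variable {E : DTheory} {r : Rule} {q : Lit}

theorem t8_A (hB : E.Basic) (hr : r ∈ E.rules) (hk : r.kind = RuleKind.defeasible)
    (hq : q ∈ r.body) (hpq : Proves true E (TaggedLit.pPartial q)) :
    ∀ c : TaggedLit, Proves true (modTheory E r q) c → Proves true E c := by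
  refine transfer_main ?_
  intro S c hstep hsub
  refine closure hB ?_
  cases hstep with
  | plusDelta q₀ h1 =>
      refine .plusDelta q₀ ?_
      rcases h1 with hf | ⟨e, he, hb⟩
      · exact Or.inl hf
      · obtain ⟨he1, he2, he3⟩ := mem_Rs.1 he
        rcases mem_mod.1 he1 with rfl | ⟨heE, hne⟩
        · exact absurd (hk.symm.trans he2) ds_ne
        · exact Or.inr ⟨e, mem_Rs.2 ⟨heE, he2, he3⟩, fun a ha => hsub (hb a ha)⟩
  | minusDelta q₀ hnf h2 =>
      refine .minusDelta q₀ hnf ?_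
      intro e he
      obtain ⟨he1, he2, he3⟩ := mem_Rs.1 he
      have hne : e ≠ r := fun hc => absurd ((hc ▸ hk).symm.trans he2) ds_ne
      obtain ⟨a, ha, hma⟩ := h2 e (mem_Rs.2 ⟨mem_mod.2 (Or.inr ⟨he1, hne⟩), he2, he3⟩)
      exact ⟨a, ha, hsub hma⟩
  | plusPartial q₀ h1 =>
      refine .plusPartial q₀ ?_
      rcases h1 with h1 | ⟨⟨e, he, hb⟩, hmc, hatt⟩
      · exact Or.inl (hsub h1)
      · obtain ⟨he1, he2, he3⟩ := mem_RD.1 he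
        have hsupp : ∃ e' ∈ E.RD true q₀, ∀ a ∈ e'.body, TaggedLit.pPartial a ∈
            {x | Proves true E x} := by
          rcases mem_mod.1 he1 with rfl | ⟨heE, hne⟩
          · refine ⟨r, mem_RD.2 ⟨hr, hk, he3⟩, ?_⟩
            intro a ha
            by_cases haq : a = q
            · subst haq; exact hpq
            · exact hsub (hb a (Finset.mem_erase_of_ne_of_mem haq ha))
          · exact ⟨e, mem_RD.2 ⟨heE, he2, he3⟩, fun a ha => hsub (hb a ha)⟩
        refine Or.inr ⟨hsupp, hsub hmc, ?_⟩
        intro s hs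
        obtain ⟨hsE, hsh⟩ := mem_Rall.1 hs
        by_cases hcs : s = r
        · subst hcs
          rcases hatt _ (mem_Rall.2 ⟨mem_mod.2 (Or.inl rfl), hsh⟩) with
            ⟨a, ha, hma⟩ | ⟨t, _, hsup, _⟩
          · exact Or.inl ⟨a, Finset.mem_of_mem_erase ha, hsub hma⟩
          · exact absurd hsup (hB.2 t _)
        · rcases hatt s (mem_Rall.2 ⟨mem_mod.2 (Or.inr ⟨hsE, hcs⟩), hsh⟩) with
            ⟨a, ha, hma⟩ | ⟨t, _, hsup, _⟩
          · exact Or.inl ⟨a, ha, hsub hma⟩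
          · exact absurd hsup (hB.2 t s)
  | minusPartial q₀ hmd hcl =>
      refine .minusPartial q₀ (hsub hmd) ?_
      rcases hcl with h1 | h1 | ⟨s, hs, hsb, _⟩
      · refine Or.inl ?_
        intro e he
        obtain ⟨he1, he2, he3⟩ := mem_RD.1 he
        by_cases hce : e = r
        · subst hce
          obtain ⟨a, ha, hma⟩ := h1 _ (mem_RD.2 ⟨mem_mod.2 (Or.inl rfl), hk, he3⟩)
          exact ⟨a, Finset.mem_of_mem_erase ha, hsub hma⟩
        · obtain ⟨a, ha, hma⟩ := h1 e (mem_RD.2 ⟨mem_mod.2 (Or.inr ⟨he1, hce⟩), he2, he3⟩)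
          exact ⟨a, ha, hsub hma⟩
      · exact Or.inr (Or.inl (hsub h1))
      · refine Or.inr (Or.inr ?_)
        obtain ⟨hs1, hs2⟩ := mem_Rall.1 hs
        rcases mem_mod.1 hs1 with rfl | ⟨hsE, hns⟩
        · refine ⟨r, mem_Rall.2 ⟨hr, hs2⟩, ?_, fun t _ => Or.inr (hB.2 t r)⟩
          intro a ha
          by_cases haq : a = q
          · subst haq; exact hpq
          · exact hsub (hsb a (Finset.mem_erase_of_ne_of_mem haq ha))
        · exact ⟨s, mem_Rall.2 ⟨hsE, hs2⟩, fun a ha => hsub (hsb a ha),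
            fun t _ => Or.inr (hB.2 t s)⟩
  | plusSigma q₀ h1 =>
      obtain ⟨e, he, hb⟩ := h1
      obtain ⟨he1, he2, he3⟩ := mem_RD.1 he
      refine .plusSigma q₀ ?_
      rcases mem_mod.1 he1 with rfl | ⟨heE, hne⟩
      · refine ⟨r, mem_RD.2 ⟨hr, hk, he3⟩, ?_⟩
        intro a ha
        by_cases haq : a = q
        · subst haq; exact hpq
        · exact hsub (hb a (Finset.mem_erase_of_ne_of_mem haq ha))
      · exact ⟨e, mem_RD.2 ⟨heE, he2, he3⟩, fun a ha => hsub (hb a ha)⟩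
  | minusSigma q₀ h1 =>
      refine .minusSigma q₀ ?_
      intro e he
      obtain ⟨he1, he2, he3⟩ := mem_RD.1 he
      by_cases hce : e = r
      · subst hce
        obtain ⟨a, ha, hma⟩ := h1 _ (mem_RD.2 ⟨mem_mod.2 (Or.inl rfl), hk, he3⟩)
        exact ⟨a, Finset.mem_of_mem_erase ha, hsub hma⟩
      · obtain ⟨a, ha, hma⟩ := h1 e (mem_RD.2 ⟨mem_mod.2 (Or.inr ⟨he1, hce⟩), he2, he3⟩)
        exact ⟨a, ha, hsub hma⟩

theorem t8_B (hB : E.Basic) (hr : r ∈ E.rules) (hk : r.kind = RuleKind.defeasible)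
    (hq : q ∈ r.body) (hpq : Proves true E (TaggedLit.pPartial q)) :
    ∀ c : TaggedLit, Proves true E c → Proves true (modTheory E r q) c := by
  have hB' := basic_mod (q := q) hB hr
  have hA := t8_A hB hr hk hq hpq
  refine transfer_main ?_
  intro S c hstep hsub
  refine closure hB' ?_
  cases hstep with
  | plusDelta q₀ h1 =>
      refine .plusDelta q₀ ?_
      rcases h1 with hf | ⟨e, he, hb⟩
      · exact Or.inl hf
      · obtain ⟨he1, he2, he3⟩ := mem_Rs.1 he
        have hne : e ≠ r := fun hc => absurd ((hc ▸ hk).symm.trans he2) ds_ne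
        exact Or.inr ⟨e, mem_Rs.2 ⟨mem_mod.2 (Or.inr ⟨he1, hne⟩), he2, he3⟩,
          fun a ha => hsub (hb a ha)⟩
  | minusDelta q₀ hnf h2 =>
      refine .minusDelta q₀ hnf ?_
      intro e he
      obtain ⟨he1, he2, he3⟩ := mem_Rs.1 he
      rcases mem_mod.1 he1 with rfl | ⟨heE, hne⟩
      · exact absurd (hk.symm.trans he2) ds_ne
      · obtain ⟨a, ha, hma⟩ := h2 e (mem_Rs.2 ⟨heE, he2, he3⟩)
        exact ⟨a, ha, hsub hma⟩
  | plusPartial q₀ h1 =>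
      refine .plusPartial q₀ ?_
      rcases h1 with h1 | ⟨⟨e, he, hb⟩, hmc, hatt⟩
      · exact Or.inl (hsub h1)
      · obtain ⟨he1, he2, he3⟩ := mem_RD.1 he
        have hsupp : ∃ e' ∈ (modTheory E r q).RD true q₀, ∀ a ∈ e'.body,
            TaggedLit.pPartial a ∈ {x | Proves true (modTheory E r q) x} := by
          by_cases hce : e = r
          · subst hce
            exact ⟨_, mem_RD.2 ⟨mem_mod.2 (Or.inl rfl), hk, he3⟩,
              fun a ha => hsub (hb a (Finset.mem_of_mem_erase ha))⟩
          · exact ⟨e, mem_RD.2 ⟨mem_mod.2 (Or.inr ⟨he1, hce⟩), he2, he3⟩,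
              fun a ha => hsub (hb a ha)⟩
        refine Or.inr ⟨hsupp, hsub hmc, ?_⟩
        intro s hs
        obtain ⟨hs1, hs2⟩ := mem_Rall.1 hs
        rcases mem_mod.1 hs1 with rfl | ⟨hsE, hns⟩
        · rcases hatt r (mem_Rall.2 ⟨hr, hs2⟩) with ⟨a, ha, hma⟩ | ⟨t, _, hsup, _⟩
          · have haq : a ≠ q := by
              rintro rfl
              exact coherent_partial hB a ⟨hpq, hA _ (hsub hma)⟩
            exact Or.inl ⟨a, Finset.mem_erase_of_ne_of_mem haq ha, hsub hma⟩
          · exact absurd hsup (hB.2 t r)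
        · rcases hatt s (mem_Rall.2 ⟨hsE, hs2⟩) with ⟨a, ha, hma⟩ | ⟨t, _, hsup, _⟩
          · exact Or.inl ⟨a, ha, hsub hma⟩
          · exact absurd hsup (hB.2 t s)
  | minusPartial q₀ hmd hcl =>
      refine .minusPartial q₀ (hsub hmd) ?_
      rcases hcl with h1 | h1 | ⟨s, hs, hsb, _⟩
      · refine Or.inl ?_
        intro e he
        obtain ⟨he1, he2, he3⟩ := mem_RD.1 he
        rcases mem_mod.1 he1 with rfl | ⟨heE, hne⟩
        · obtain ⟨a, ha, hma⟩ := h1 r (mem_RD.2 ⟨hr, hk, he3⟩)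
          have haq : a ≠ q := by
            rintro rfl
            exact coherent_partial hB a ⟨hpq, hA _ (hsub hma)⟩
          exact ⟨a, Finset.mem_erase_of_ne_of_mem haq ha, hsub hma⟩
        · obtain ⟨a, ha, hma⟩ := h1 e (mem_RD.2 ⟨heE, he2, he3⟩)
          exact ⟨a, ha, hsub hma⟩
      · exact Or.inr (Or.inl (hsub h1))
      · refine Or.inr (Or.inr ?_)
        obtain ⟨hs1, hs2⟩ := mem_Rall.1 hs
        by_cases hcs : s = r
        · subst hcs
          exact ⟨_, mem_Rall.2 ⟨mem_mod.2 (Or.inl rfl), hs2⟩,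
            fun a ha => hsub (hsb a (Finset.mem_of_mem_erase ha)),
            fun t _ => Or.inr (hB.2 t _)⟩
        · exact ⟨s, mem_Rall.2 ⟨mem_mod.2 (Or.inr ⟨hs1, hcs⟩), hs2⟩,
            fun a ha => hsub (hsb a ha), fun t _ => Or.inr (hB.2 t s)⟩
  | plusSigma q₀ h1 =>
      obtain ⟨e, he, hb⟩ := h1
      obtain ⟨he1, he2, he3⟩ := mem_RD.1 he
      refine .plusSigma q₀ ?_
      by_cases hce : e = r
      · subst hce
        exact ⟨_, mem_RD.2 ⟨mem_mod.2 (Or.inl rfl), hk, he3⟩,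
          fun a ha => hsub (hb a (Finset.mem_of_mem_erase ha))⟩
      · exact ⟨e, mem_RD.2 ⟨mem_mod.2 (Or.inr ⟨he1, hce⟩), he2, he3⟩,
          fun a ha => hsub (hb a ha)⟩
  | minusSigma q₀ h1 =>
      refine .minusSigma q₀ ?_
      intro e he
      obtain ⟨he1, he2, he3⟩ := mem_RD.1 he
      rcases mem_mod.1 he1 with rfl | ⟨heE, hne⟩
      · obtain ⟨a, ha, hma⟩ := h1 r (mem_RD.2 ⟨hr, hk, he3⟩)
        have haq : a ≠ q := by
          rintro rfl
          exact coherent_partial hB a ⟨hpq, hA _ (hsub hma)⟩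
        exact ⟨a, Finset.mem_erase_of_ne_of_mem haq ha, hsub hma⟩
      · obtain ⟨a, ha, hma⟩ := h1 e (mem_RD.2 ⟨heE, he2, he3⟩)
        exact ⟨a, ha, hsub hma⟩

theorem t8_equiv (hB : E.Basic) (hr : r ∈ E.rules) (hk : r.kind = RuleKind.defeasible)
    (hq : q ∈ r.body) (hpq : Proves true E (TaggedLit.pPartial q)) :
    ∀ c, Proves true E c ↔ Proves true (modTheory E r q) c :=
  fun c => ⟨t8_B hB hr hk hq hpq c, t8_A hB hr hk hq hpq c⟩

end T8

/-! ### Transition 9: deleting a strict rule -/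

section T9
variable {E : DTheory} {r : Rule} {q : Lit}

theorem t9_A (hB : E.Basic) (hr : r ∈ E.rules) (hk : r.kind = RuleKind.strict)
    (hq : q ∈ r.body) (hmq : Proves true E (TaggedLit.mDelta q))
    (hSh : ShadowOn E {x | Proves true E x}) :
    ∀ c : TaggedLit, Proves true (delTheory E r) c → Proves true E c := by
  refine transfer_main ?_
  intro S c hstep hsub
  refine closure hB ?_
  cases hstep with
  | plusDelta q₀ h1 =>
      refine .plusDelta q₀ ?_
      rcases h1 with hf | ⟨e, he, hb⟩
      · exact Or.inl hf
      · obtain ⟨he1, he2, he3⟩ := mem_Rs.1 he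
        exact Or.inr ⟨e, mem_Rs.2 ⟨(mem_del.1 he1).1, he2, he3⟩, fun a ha => hsub (hb a ha)⟩
  | minusDelta q₀ hnf h2 =>
      refine .minusDelta q₀ hnf ?_
      intro e he
      obtain ⟨he1, he2, he3⟩ := mem_Rs.1 he
      by_cases hce : e = r
      · subst hce; exact ⟨q, hq, hmq⟩
      · obtain ⟨a, ha, hma⟩ := h2 e (mem_Rs.2 ⟨mem_del.2 ⟨he1, hce⟩, he2, he3⟩)
        exact ⟨a, ha, hsub hma⟩
  | plusPartial q₀ h1 =>
      refine .plusPartial q₀ ?_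
      rcases h1 with h1 | ⟨⟨e, he, hb⟩, hmc, hatt⟩
      · exact Or.inl (hsub h1)
      · obtain ⟨he1, he2, he3⟩ := mem_RD.1 he
        refine Or.inr ⟨⟨e, mem_RD.2 ⟨(mem_del.1 he1).1, he2, he3⟩,
          fun a ha => hsub (hb a ha)⟩, hsub hmc, ?_⟩
        intro s hs
        obtain ⟨hsE, hsh⟩ := mem_Rall.1 hs
        by_cases hcs : s = r
        · subst hcs
          rcases hSh s hr hk with ⟨d, hdE, hdk, hdh, hcond⟩ | ⟨a, ha, hma⟩
          · have hdne : d ≠ s := fun hc => absurd ((hc ▸ hdk).symm.trans hk) ds_ne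
            rcases hatt d (mem_Rall.2 ⟨mem_del.2 ⟨hdE, hdne⟩, hdh.trans hsh⟩) with
              ⟨a, ha, hma⟩ | ⟨t, _, hsup, _⟩
            · rcases hcond a ha with hab | hpd
              · exact Or.inl ⟨a, hab, hsub hma⟩
              · exact absurd ⟨provesP hB hpd, hsub hma⟩ (coherent_partial hB a)
            · exact absurd hsup (hB.2 t d)
          · exact Or.inl ⟨a, ha, hma⟩
        · rcases hatt s (mem_Rall.2 ⟨mem_del.2 ⟨hsE, hcs⟩, hsh⟩) with
            ⟨a, ha, hma⟩ | ⟨t, _, hsup, _⟩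
          · exact Or.inl ⟨a, ha, hsub hma⟩
          · exact absurd hsup (hB.2 t s)
  | minusPartial q₀ hmd hcl =>
      refine .minusPartial q₀ (hsub hmd) ?_
      rcases hcl with h1 | h1 | ⟨s, hs, hsb, _⟩
      · refine Or.inl ?_
        intro e he
        obtain ⟨he1, he2, he3⟩ := mem_RD.1 he
        have hne : e ≠ r := fun hc => absurd ((hc ▸ hk).symm.trans he2) sd_ne
        obtain ⟨a, ha, hma⟩ := h1 e (mem_RD.2 ⟨mem_del.2 ⟨he1, hne⟩, he2, he3⟩)
        exact ⟨a, ha, hsub hma⟩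
      · exact Or.inr (Or.inl (hsub h1))
      · obtain ⟨hs1, hs2⟩ := mem_Rall.1 hs
        exact Or.inr (Or.inr ⟨s, mem_Rall.2 ⟨(mem_del.1 hs1).1, hs2⟩,
          fun a ha => hsub (hsb a ha), fun t _ => Or.inr (hB.2 t s)⟩)
  | plusSigma q₀ h1 =>
      obtain ⟨e, he, hb⟩ := h1
      obtain ⟨he1, he2, he3⟩ := mem_RD.1 he
      exact .plusSigma q₀ ⟨e, mem_RD.2 ⟨(mem_del.1 he1).1, he2, he3⟩,
        fun a ha => hsub (hb a ha)⟩
  | minusSigma q₀ h1 =>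
      refine .minusSigma q₀ ?_
      intro e he
      obtain ⟨he1, he2, he3⟩ := mem_RD.1 he
      have hne : e ≠ r := fun hc => absurd ((hc ▸ hk).symm.trans he2) sd_ne
      obtain ⟨a, ha, hma⟩ := h1 e (mem_RD.2 ⟨mem_del.2 ⟨he1, hne⟩, he2, he3⟩)
      exact ⟨a, ha, hsub hma⟩

theorem t9_delta (hB : E.Basic) (hr : r ∈ E.rules) (hk : r.kind = RuleKind.strict)
    (hq : q ∈ r.body) (hmq : Proves true E (TaggedLit.mDelta q))
    (hSh : ShadowOn E {x | Proves true E x}) :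
    (∀ q₀, Proves true E (TaggedLit.pDelta q₀) →
      Proves true (delTheory E r) (TaggedLit.pDelta q₀)) ∧
    (∀ q₀, Proves true E (TaggedLit.mDelta q₀) →
      Proves true (delTheory E r) (TaggedLit.mDelta q₀)) := by
  have hB' := basic_del (r := r) hB
  have hA := t9_A hB hr hk hq hmq hSh
  refine delta_transfer ?_ ?_
  · intro S q₀ hstep hΔp hΔm
    cases hstep with
    | plusDelta q₀ h1 =>
        refine closure hB' (.plusDelta q₀ ?_)
        rcases h1 with hf | ⟨e, he, hb⟩
        · exact Or.inl hf
        · obtain ⟨he1, he2, he3⟩ := mem_Rs.1 he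
          by_cases hce : e = r
          · subst hce
            exact absurd ⟨hA _ (hΔp q (hb q hq)), hmq⟩ (coherent_delta hB q)
          · exact Or.inr ⟨e, mem_Rs.2 ⟨mem_del.2 ⟨he1, hce⟩, he2, he3⟩,
              fun a ha => hΔp a (hb a ha)⟩
  · intro S q₀ hstep hΔp hΔm
    cases hstep with
    | minusDelta q₀ hnf h2 =>
        refine closure hB' (.minusDelta q₀ hnf ?_)
        intro e he
        obtain ⟨he1, he2, he3⟩ := mem_Rs.1 he
        obtain ⟨a, ha, hma⟩ := h2 e (mem_Rs.2 ⟨(mem_del.1 he1).1, he2, he3⟩)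
        exact ⟨a, ha, hΔm a hma⟩

theorem t9_B (hB : E.Basic) (hr : r ∈ E.rules) (hk : r.kind = RuleKind.strict)
    (hq : q ∈ r.body) (hmq : Proves true E (TaggedLit.mDelta q))
    (hSh : ShadowOn E {x | Proves true E x}) :
    ∀ c : TaggedLit, Proves true E c → Proves true (delTheory E r) c := by
  have hB' := basic_del (r := r) hB
  have hA := t9_A hB hr hk hq hmq hSh
  have hΔ := t9_delta hB hr hk hq hmq hSh
  refine transfer_main ?_
  intro S c hstep hsub
  refine closure hB' ?_
  cases hstep with
  | plusDelta q₀ h1 =>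
      refine .plusDelta q₀ ?_
      rcases h1 with hf | ⟨e, he, hb⟩
      · exact Or.inl hf
      · obtain ⟨he1, he2, he3⟩ := mem_Rs.1 he
        by_cases hce : e = r
        · subst hce
          exact absurd ⟨hA _ (hsub (hb q hq)), hmq⟩ (coherent_delta hB q)
        · exact Or.inr ⟨e, mem_Rs.2 ⟨mem_del.2 ⟨he1, hce⟩, he2, he3⟩,
            fun a ha => hsub (hb a ha)⟩
  | minusDelta q₀ hnf h2 =>
      refine .minusDelta q₀ hnf ?_
      intro e he
      obtain ⟨he1, he2, he3⟩ := mem_Rs.1 he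
      obtain ⟨a, ha, hma⟩ := h2 e (mem_Rs.2 ⟨(mem_del.1 he1).1, he2, he3⟩)
      exact ⟨a, ha, hsub hma⟩
  | plusPartial q₀ h1 =>
      refine .plusPartial q₀ ?_
      rcases h1 with h1 | ⟨⟨e, he, hb⟩, hmc, hatt⟩
      · exact Or.inl (hsub h1)
      · obtain ⟨he1, he2, he3⟩ := mem_RD.1 he
        have hne : e ≠ r := fun hc => absurd ((hc ▸ hk).symm.trans he2) sd_ne
        refine Or.inr ⟨⟨e, mem_RD.2 ⟨mem_del.2 ⟨he1, hne⟩, he2, he3⟩,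
          fun a ha => hsub (hb a ha)⟩, hsub hmc, ?_⟩
        intro s hs
        obtain ⟨hs1, hs2⟩ := mem_Rall.1 hs
        rcases hatt s (mem_Rall.2 ⟨(mem_del.1 hs1).1, hs2⟩) with
          ⟨a, ha, hma⟩ | ⟨t, _, hsup, _⟩
        · exact Or.inl ⟨a, ha, hsub hma⟩
        · exact absurd hsup (hB.2 t s)
  | minusPartial q₀ hmd hcl =>
      refine .minusPartial q₀ (hsub hmd) ?_
      rcases hcl with h1 | h1 | ⟨s, hs, hsb, _⟩
      · refine Or.inl ?_
        intro e he
        obtain ⟨he1, he2, he3⟩ := mem_RD.1 he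
        obtain ⟨a, ha, hma⟩ := h1 e (mem_RD.2 ⟨(mem_del.1 he1).1, he2, he3⟩)
        exact ⟨a, ha, hsub hma⟩
      · exact Or.inr (Or.inl (hsub h1))
      · refine Or.inr (Or.inr ?_)
        obtain ⟨hs1, hs2⟩ := mem_Rall.1 hs
        by_cases hcs : s = r
        · subst hcs
          rcases hSh s hr hk with ⟨d, hdE, hdk, hdh, hcond⟩ | ⟨a, ha, hma⟩
          · have hdne : d ≠ s := fun hc => absurd ((hc ▸ hdk).symm.trans hk) ds_ne
            refine ⟨d, mem_Rall.2 ⟨mem_del.2 ⟨hdE, hdne⟩, hdh.trans hs2⟩, ?_,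
              fun t _ => Or.inr (hB.2 t d)⟩
            intro a ha
            rcases hcond a ha with hab | hpd
            · exact hsub (hsb a hab)
            · exact provesP hB' (hΔ.1 a hpd)
          · exact absurd ⟨hA _ (hsub (hsb a ha)), hma⟩ (coherent_partial hB a)
        · exact ⟨s, mem_Rall.2 ⟨mem_del.2 ⟨hs1, hcs⟩, hs2⟩,
            fun a ha => hsub (hsb a ha), fun t _ => Or.inr (hB.2 t s)⟩
  | plusSigma q₀ h1 =>
      obtain ⟨e, he, hb⟩ := h1
      obtain ⟨he1, he2, he3⟩ := mem_RD.1 he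
      have hne : e ≠ r := fun hc => absurd ((hc ▸ hk).symm.trans he2) sd_ne
      exact .plusSigma q₀ ⟨e, mem_RD.2 ⟨mem_del.2 ⟨he1, hne⟩, he2, he3⟩,
        fun a ha => hsub (hb a ha)⟩
  | minusSigma q₀ h1 =>
      refine .minusSigma q₀ ?_
      intro e he
      obtain ⟨he1, he2, he3⟩ := mem_RD.1 he
      obtain ⟨a, ha, hma⟩ := h1 e (mem_RD.2 ⟨(mem_del.1 he1).1, he2, he3⟩)
      exact ⟨a, ha, hsub hma⟩

theorem t9_equiv (hB : E.Basic) (hr : r ∈ E.rules) (hk : r.kind = RuleKind.strict)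
    (hq : q ∈ r.body) (hmq : Proves true E (TaggedLit.mDelta q))
    (hSh : ShadowOn E {x | Proves true E x}) :
    ∀ c, Proves true E c ↔ Proves true (delTheory E r) c :=
  fun c => ⟨t9_B hB hr hk hq hmq hSh c, t9_A hB hr hk hq hmq hSh c⟩

end T9

/-! ### Transition 10: deleting a defeasible rule -/

section T10
variable {E : DTheory} {r : Rule} {q : Lit}

theorem t10_A (hB : E.Basic) (hr : r ∈ E.rules) (hk : r.kind = RuleKind.defeasible)
    (hq : q ∈ r.body) (hmq : Proves true E (TaggedLit.mPartial q)) :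
    ∀ c : TaggedLit, Proves true (delTheory E r) c → Proves true E c := by
  refine transfer_main ?_
  intro S c hstep hsub
  refine closure hB ?_
  cases hstep with
  | plusDelta q₀ h1 =>
      refine .plusDelta q₀ ?_
      rcases h1 with hf | ⟨e, he, hb⟩
      · exact Or.inl hf
      · obtain ⟨he1, he2, he3⟩ := mem_Rs.1 he
        exact Or.inr ⟨e, mem_Rs.2 ⟨(mem_del.1 he1).1, he2, he3⟩, fun a ha => hsub (hb a ha)⟩
  | minusDelta q₀ hnf h2 =>
      refine .minusDelta q₀ hnf ?_
      intro e he
      obtain ⟨he1, he2, he3⟩ := mem_Rs.1 he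
      have hne : e ≠ r := fun hc => absurd ((hc ▸ hk).symm.trans he2) ds_ne
      obtain ⟨a, ha, hma⟩ := h2 e (mem_Rs.2 ⟨mem_del.2 ⟨he1, hne⟩, he2, he3⟩)
      exact ⟨a, ha, hsub hma⟩
  | plusPartial q₀ h1 =>
      refine .plusPartial q₀ ?_
      rcases h1 with h1 | ⟨⟨e, he, hb⟩, hmc, hatt⟩
      · exact Or.inl (hsub h1)
      · obtain ⟨he1, he2, he3⟩ := mem_RD.1 he
        refine Or.inr ⟨⟨e, mem_RD.2 ⟨(mem_del.1 he1).1, he2, he3⟩,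
          fun a ha => hsub (hb a ha)⟩, hsub hmc, ?_⟩
        intro s hs
        obtain ⟨hsE, hsh⟩ := mem_Rall.1 hs
        by_cases hcs : s = r
        · subst hcs; exact Or.inl ⟨q, hq, hmq⟩
        · rcases hatt s (mem_Rall.2 ⟨mem_del.2 ⟨hsE, hcs⟩, hsh⟩) with
            ⟨a, ha, hma⟩ | ⟨t, _, hsup, _⟩
          · exact Or.inl ⟨a, ha, hsub hma⟩
          · exact absurd hsup (hB.2 t s)
  | minusPartial q₀ hmd hcl =>
      refine .minusPartial q₀ (hsub hmd) ?_
      rcases hcl with h1 | h1 | ⟨s, hs, hsb, _⟩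
      · refine Or.inl ?_
        intro e he
        obtain ⟨he1, he2, he3⟩ := mem_RD.1 he
        by_cases hce : e = r
        · subst hce; exact ⟨q, hq, hmq⟩
        · obtain ⟨a, ha, hma⟩ := h1 e (mem_RD.2 ⟨mem_del.2 ⟨he1, hce⟩, he2, he3⟩)
          exact ⟨a, ha, hsub hma⟩
      · exact Or.inr (Or.inl (hsub h1))
      · obtain ⟨hs1, hs2⟩ := mem_Rall.1 hs
        exact Or.inr (Or.inr ⟨s, mem_Rall.2 ⟨(mem_del.1 hs1).1, hs2⟩,
          fun a ha => hsub (hsb a ha), fun t _ => Or.inr (hB.2 t s)⟩)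
  | plusSigma q₀ h1 =>
      obtain ⟨e, he, hb⟩ := h1
      obtain ⟨he1, he2, he3⟩ := mem_RD.1 he
      exact .plusSigma q₀ ⟨e, mem_RD.2 ⟨(mem_del.1 he1).1, he2, he3⟩,
        fun a ha => hsub (hb a ha)⟩
  | minusSigma q₀ h1 =>
      refine .minusSigma q₀ ?_
      intro e he
      obtain ⟨he1, he2, he3⟩ := mem_RD.1 he
      by_cases hce : e = r
      · subst hce; exact ⟨q, hq, hmq⟩
      · obtain ⟨a, ha, hma⟩ := h1 e (mem_RD.2 ⟨mem_del.2 ⟨he1, hce⟩, he2, he3⟩)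
        exact ⟨a, ha, hsub hma⟩

theorem t10_B (hB : E.Basic) (hr : r ∈ E.rules) (hk : r.kind = RuleKind.defeasible)
    (hq : q ∈ r.body) (hmq : Proves true E (TaggedLit.mPartial q)) :
    ∀ c : TaggedLit, Proves true E c → Proves true (delTheory E r) c := by
  have hB' := basic_del (r := r) hB
  have hA := t10_A hB hr hk hq hmq
  refine transfer_main ?_
  intro S c hstep hsub
  refine closure hB' ?_
  cases hstep with
  | plusDelta q₀ h1 =>
      refine .plusDelta q₀ ?_
      rcases h1 with hf | ⟨e, he, hb⟩
      · exact Or.inl hf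
      · obtain ⟨he1, he2, he3⟩ := mem_Rs.1 he
        have hne : e ≠ r := fun hc => absurd ((hc ▸ hk).symm.trans he2) ds_ne
        exact Or.inr ⟨e, mem_Rs.2 ⟨mem_del.2 ⟨he1, hne⟩, he2, he3⟩,
          fun a ha => hsub (hb a ha)⟩
  | minusDelta q₀ hnf h2 =>
      refine .minusDelta q₀ hnf ?_
      intro e he
      obtain ⟨he1, he2, he3⟩ := mem_Rs.1 he
      obtain ⟨a, ha, hma⟩ := h2 e (mem_Rs.2 ⟨(mem_del.1 he1).1, he2, he3⟩)
      exact ⟨a, ha, hsub hma⟩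
  | plusPartial q₀ h1 =>
      refine .plusPartial q₀ ?_
      rcases h1 with h1 | ⟨⟨e, he, hb⟩, hmc, hatt⟩
      · exact Or.inl (hsub h1)
      · obtain ⟨he1, he2, he3⟩ := mem_RD.1 he
        have hne : e ≠ r := by
          rintro rfl
          exact coherent_partial hB q ⟨hA _ (hsub (hb q hq)), hmq⟩
        refine Or.inr ⟨⟨e, mem_RD.2 ⟨mem_del.2 ⟨he1, hne⟩, he2, he3⟩,
          fun a ha => hsub (hb a ha)⟩, hsub hmc, ?_⟩
        intro s hs
        obtain ⟨hs1, hs2⟩ := mem_Rall.1 hs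
        rcases hatt s (mem_Rall.2 ⟨(mem_del.1 hs1).1, hs2⟩) with
          ⟨a, ha, hma⟩ | ⟨t, _, hsup, _⟩
        · exact Or.inl ⟨a, ha, hsub hma⟩
        · exact absurd hsup (hB.2 t s)
  | minusPartial q₀ hmd hcl =>
      refine .minusPartial q₀ (hsub hmd) ?_
      rcases hcl with h1 | h1 | ⟨s, hs, hsb, _⟩
      · refine Or.inl ?_
        intro e he
        obtain ⟨he1, he2, he3⟩ := mem_RD.1 he
        obtain ⟨a, ha, hma⟩ := h1 e (mem_RD.2 ⟨(mem_del.1 he1).1, he2, he3⟩)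
        exact ⟨a, ha, hsub hma⟩
      · exact Or.inr (Or.inl (hsub h1))
      · refine Or.inr (Or.inr ?_)
        obtain ⟨hs1, hs2⟩ := mem_Rall.1 hs
        have hns : s ≠ r := by
          rintro rfl
          exact coherent_partial hB q ⟨hA _ (hsub (hsb q hq)), hmq⟩
        exact ⟨s, mem_Rall.2 ⟨mem_del.2 ⟨hs1, hns⟩, hs2⟩,
          fun a ha => hsub (hsb a ha), fun t _ => Or.inr (hB.2 t s)⟩
  | plusSigma q₀ h1 =>
      obtain ⟨e, he, hb⟩ := h1
      obtain ⟨he1, he2, he3⟩ := mem_RD.1 he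
      have hne : e ≠ r := by
        rintro rfl
        exact coherent_partial hB q ⟨hA _ (hsub (hb q hq)), hmq⟩
      exact .plusSigma q₀ ⟨e, mem_RD.2 ⟨mem_del.2 ⟨he1, hne⟩, he2, he3⟩,
        fun a ha => hsub (hb a ha)⟩
  | minusSigma q₀ h1 =>
      refine .minusSigma q₀ ?_
      intro e he
      obtain ⟨he1, he2, he3⟩ := mem_RD.1 he
      obtain ⟨a, ha, hma⟩ := h1 e (mem_RD.2 ⟨(mem_del.1 he1).1, he2, he3⟩)
      exact ⟨a, ha, hsub hma⟩

theorem t10_equiv (hB : E.Basic) (hr : r ∈ E.rules) (hk : r.kind = RuleKind.defeasible)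
    (hq : q ∈ r.body) (hmq : Proves true E (TaggedLit.mPartial q)) :
    ∀ c, Proves true E c ↔ Proves true (delTheory E r) c :=
  fun c => ⟨t10_B hB hr hk hq hmq c, t10_A hB hr hk hq hmq c⟩

end T10

/-! ### Shadow preservation -/

section ShadowPres
variable {E : DTheory} {r : Rule} {q : Lit}

theorem shadow_t7 (hB : E.Basic) (hr : r ∈ E.rules) (hk : r.kind = RuleKind.strict)
    (hq : q ∈ r.body) (hpq : Proves true E (TaggedLit.pDelta q))
    (hSh : ShadowOn E {x | Proves true E x}) :
    ShadowOn (modTheory E r q) {x | Proves true (modTheory E r q) x} := by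
  have heq := t7_equiv hB hr hk hq hpq
  intro s hs hsk
  rcases mem_mod.1 hs with rfl | ⟨hsE, hns⟩
  · rcases hSh r hr hk with ⟨d, hdE, hdk, hdh, hcond⟩ | ⟨a, ha, hma⟩
    · have hdne : d ≠ r := fun hc => absurd ((hc ▸ hdk).symm.trans hk) ds_ne
      refine Or.inl ⟨d, mem_mod.2 (Or.inr ⟨hdE, hdne⟩), hdk, hdh, ?_⟩
      intro a ha
      rcases hcond a ha with hab | hpd
      · by_cases haq : a = q
        · subst haq; exact Or.inr ((heq _).1 hpq)
        · exact Or.inl (Finset.mem_erase_of_ne_of_mem haq hab)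
      · exact Or.inr ((heq _).1 hpd)
    · have haq : a ≠ q := by
        rintro rfl
        exact coherent_partial hB a ⟨provesP hB hpq, hma⟩
      exact Or.inr ⟨a, Finset.mem_erase_of_ne_of_mem haq ha, (heq _).1 hma⟩
  · rcases hSh s hsE hsk with ⟨d, hdE, hdk, hdh, hcond⟩ | ⟨a, ha, hma⟩
    · have hdne : d ≠ r := fun hc => absurd ((hc ▸ hdk).symm.trans hk) ds_ne
      exact Or.inl ⟨d, mem_mod.2 (Or.inr ⟨hdE, hdne⟩), hdk, hdh,
        fun a ha => (hcond a ha).imp id (fun h => (heq _).1 h)⟩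
    · exact Or.inr ⟨a, ha, (heq _).1 hma⟩

theorem shadow_t8 (hB : E.Basic) (hr : r ∈ E.rules) (hk : r.kind = RuleKind.defeasible)
    (hq : q ∈ r.body) (hpq : Proves true E (TaggedLit.pPartial q))
    (hSh : ShadowOn E {x | Proves true E x}) :
    ShadowOn (modTheory E r q) {x | Proves true (modTheory E r q) x} := by
  have heq := t8_equiv hB hr hk hq hpq
  intro s hs hsk
  rcases mem_mod.1 hs with rfl | ⟨hsE, hns⟩
  · exact absurd (hk.symm.trans hsk) ds_ne
  · rcases hSh s hsE hsk with ⟨d, hdE, hdk, hdh, hcond⟩ | ⟨a, ha, hma⟩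
    · by_cases hdr : d = r
      · subst hdr
        refine Or.inl ⟨_, mem_mod.2 (Or.inl rfl), hk, hdh, ?_⟩
        intro a ha
        exact (hcond a (Finset.mem_of_mem_erase ha)).imp id (fun h => (heq _).1 h)
      · exact Or.inl ⟨d, mem_mod.2 (Or.inr ⟨hdE, hdr⟩), hdk, hdh,
          fun a ha => (hcond a ha).imp id (fun h => (heq _).1 h)⟩
    · exact Or.inr ⟨a, ha, (heq _).1 hma⟩

theorem shadow_t9 (hB : E.Basic) (hr : r ∈ E.rules) (hk : r.kind = RuleKind.strict)
    (hq : q ∈ r.body) (hmq : Proves true E (TaggedLit.mDelta q))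
    (hSh : ShadowOn E {x | Proves true E x}) :
    ShadowOn (delTheory E r) {x | Proves true (delTheory E r) x} := by
  have heq := t9_equiv hB hr hk hq hmq hSh
  intro s hs hsk
  obtain ⟨hsE, hns⟩ := mem_del.1 hs
  rcases hSh s hsE hsk with ⟨d, hdE, hdk, hdh, hcond⟩ | ⟨a, ha, hma⟩
  · have hdne : d ≠ r := fun hc => absurd ((hc ▸ hdk).symm.trans hk) ds_ne
    exact Or.inl ⟨d, mem_del.2 ⟨hdE, hdne⟩, hdk, hdh,
      fun a ha => (hcond a ha).imp id (fun h => (heq _).1 h)⟩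
  · exact Or.inr ⟨a, ha, (heq _).1 hma⟩

theorem shadow_t10 (hB : E.Basic) (hr : r ∈ E.rules) (hk : r.kind = RuleKind.defeasible)
    (hq : q ∈ r.body) (hmq : Proves true E (TaggedLit.mPartial q))
    (hSh : ShadowOn E {x | Proves true E x}) :
    ShadowOn (delTheory E r) {x | Proves true (delTheory E r) x} := by
  have heq := t10_equiv hB hr hk hq hmq
  intro s hs hsk
  obtain ⟨hsE, hns⟩ := mem_del.1 hs
  rcases hSh s hsE hsk with ⟨d, hdE, hdk, hdh, hcond⟩ | ⟨a, ha, hma⟩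
  · by_cases hdr : d = r
    · subst hdr
      rcases hcond q hq with hqs | hpd
      · exact Or.inr ⟨q, hqs, (heq _).1 hmq⟩
      · exact absurd ⟨provesP hB hpd, hmq⟩ (coherent_partial hB q)
    · exact Or.inl ⟨d, mem_del.2 ⟨hdE, hdr⟩, hdk, hdh,
        fun a ha => (hcond a ha).imp id (fun h => (heq _).1 h)⟩
  · exact Or.inr ⟨a, ha, (heq _).1 hma⟩

end ShadowPres

/-! ### The invariant -/

def CInvElem (E : DTheory) : TaggedLit → Prop
  | .pDelta q => Proves true E (.pDelta q)
  | .mDelta q => Proves true E (.mDelta q)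
  | .pPartial q => Proves true E (.pPartial q)
  | .mPartial q => Proves true E (.mPartial q)
  | .pSigma q => Proves true E (.pSigma q) ∨ Proves true E (.pDelta q)
  | .mSigma q => Proves true E (.mSigma q)

theorem cinv_transport {E E' : DTheory} (heq : ∀ c, Proves true E c ↔ Proves true E' c)
    {x : TaggedLit} (hx : CInvElem E x) : CInvElem E' x := by
  cases x with
  | pDelta q => exact (heq _).1 hx
  | mDelta q => exact (heq _).1 hx
  | pPartial q => exact (heq _).1 hx
  | mPartial q => exact (heq _).1 hx
  | pSigma q => exact hx.imp (fun h => (heq _).1 h) (fun h => (heq _).1 h)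
  | mSigma q => exact (heq _).1 hx

theorem proves_single {D : DTheory} {c : TaggedLit}
    (h : Step true D {x | x ∈ ([] : List TaggedLit)} c) : Proves true D c :=
  ⟨[c], .snoc [] c .nil h, by simp⟩

def Inv (D₀ : DTheory) (s : DTheory × Set TaggedLit) : Prop :=
  s.1.Basic ∧ ShadowOn s.1 {x | Proves true s.1 x} ∧
  (∀ x ∈ s.2, CInvElem s.1 x) ∧ (∀ c, Proves true D₀ c ↔ Proves true s.1 c)

/-- +∂q is provable whenever +σq, −Δ~q, −σ~q are (basic theory with shadows). -/
theorem t5_key {E : DTheory} (hB : E.Basic) (hSh : ShadowOn E {x | Proves true E x})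
    {q : Lit} (hps : Proves true E (TaggedLit.pSigma q))
    (hmdc : Proves true E (TaggedLit.mDelta q.compl))
    (hmsc : Proves true E (TaggedLit.mSigma q.compl)) :
    Proves true E (TaggedLit.pPartial q) := by
  have hσ := proves_step hB hps
  have hσ' := proves_step hB hmsc
  cases hσ with
  | plusSigma _ h1 =>
  cases hσ' with
  | minusSigma _ hall =>
  refine closure hB (.plusPartial q (Or.inr ⟨h1, hmdc, ?_⟩))
  intro s hs
  obtain ⟨hsE, hsh⟩ := mem_Rall.1 hs
  rcases hks : s.kind with _ | _ | _
  · -- strict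
    rcases hSh s hsE hks with ⟨d, hdE, hdk, hdh, hcond⟩ | ⟨a, ha, hma⟩
    · obtain ⟨a, ha, hma⟩ := hall d (mem_RD.2 ⟨hdE, hdk, hdh.trans hsh⟩)
      rcases hcond a ha with hab | hpd
      · exact Or.inl ⟨a, hab, hma⟩
      · exact absurd ⟨provesP hB hpd, hma⟩ (coherent_partial hB a)
    · exact Or.inl ⟨a, ha, hma⟩
  · -- defeasible
    obtain ⟨a, ha, hma⟩ := hall s (mem_RD.2 ⟨hsE, hks, hsh⟩)
    exact Or.inl ⟨a, ha, hma⟩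
  · -- defeater
    exact absurd hks (hB.1 s hsE)

/-- −∂q from +σ~q (basic theory). -/
theorem t6_key {E : DTheory} (hB : E.Basic) {q : Lit}
    (hmd : Proves true E (TaggedLit.mDelta q))
    (hps : Proves true E (TaggedLit.pSigma q.compl)) :
    Proves true E (TaggedLit.mPartial q) := by
  have hσ := proves_step hB hps
  cases hσ with
  | plusSigma _ h1 =>
  obtain ⟨e, he, hb⟩ := h1
  obtain ⟨heE, hek, heh⟩ := mem_RD.1 he
  exact closure hB (.minusPartial q hmd (Or.inr (Or.inr
    ⟨e, mem_Rall.2 ⟨heE, heh⟩, hb, fun t _ => Or.inr (hB.2 t e)⟩)))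

theorem inv_step {D₀ : DTheory} {L : Set Lit} {s s' : DTheory × Set TaggedLit}
    (h : Inv D₀ s) (ht : DLTrans L s s') : Inv D₀ s' := by
  obtain ⟨hB, hSh, hC, hEq⟩ := h
  cases ht with
  | t1 E C q hL hcond =>
      refine ⟨hB, hSh, ?_, hEq⟩
      have hpd : Proves true E (TaggedLit.pDelta q) := by
        rcases hcond with hf | ⟨e, heE, hek, heh, hbe⟩
        · exact proves_single (.plusDelta q (Or.inl hf))
        · refine proves_single (.plusDelta q (Or.inr ⟨e, mem_Rs.2 ⟨heE, hek, heh⟩, ?_⟩))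
          rw [hbe]; intro a ha; exact absurd ha (Finset.notMem_empty a)
      intro x hx
      rcases hx with hx | hx
      · exact hC x hx
      · rcases hx with rfl | rfl | rfl
        · exact hpd
        · exact provesP hB hpd
        · exact Or.inr hpd
  | t2 E C q hL hcond =>
      refine ⟨hB, hSh, ?_, hEq⟩
      obtain ⟨e, heE, hek, heh, hbe⟩ := hcond
      have hps : Proves true E (TaggedLit.pSigma q) := by
        refine proves_single (.plusSigma q ⟨e, mem_RD.2 ⟨heE, hek, heh⟩, ?_⟩)
        rw [hbe]; intro a ha; exact absurd ha (Finset.notMem_empty a)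
      intro x hx
      rcases hx with rfl | hx
      · exact Or.inl hps
      · exact hC x hx
  | t3 E C q hL hno hqf =>
      refine ⟨hB, hSh, ?_, hEq⟩
      have hmd : Proves true E (TaggedLit.mDelta q) := by
        refine proves_single (.minusDelta q hqf ?_)
        intro e he
        obtain ⟨heE, hek, heh⟩ := mem_Rs.1 he
        exact absurd ⟨hek, heh⟩ (hno e heE)
      intro x hx
      rcases hx with rfl | hx
      · exact hmd
      · exact hC x hx
  | t4 E C q hL hno =>
      refine ⟨hB, hSh, ?_, hEq⟩
      have hms : Proves true E (TaggedLit.mSigma q) := by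
        refine proves_single (.minusSigma q ?_)
        intro e he
        obtain ⟨heE, hek, heh⟩ := mem_RD.1 he
        exact absurd heh (hno e heE)
      intro x hx
      rcases hx with rfl | hx
      · exact hms
      · exact hC x hx
  | t5 E C q hL hcond =>
      refine ⟨hB, hSh, ?_, hEq⟩
      have hpp : Proves true E (TaggedLit.pPartial q) := by
        rcases hcond with h1 | ⟨h1, h2, h3⟩
        · exact provesP hB (hC _ h1)
        · rcases (hC _ h1 : CInvElem E (TaggedLit.pSigma q)) with hps | hpd
          · exact t5_key hB hSh hps (hC _ h2) (hC _ h3)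
          · exact provesP hB hpd
      intro x hx
      rcases hx with rfl | hx
      · exact hpp
      · exact hC x hx
  | t6 E C q hL h2 h3 =>
      refine ⟨hB, hSh, ?_, hEq⟩
      have hmd : Proves true E (TaggedLit.mDelta q) := hC _ h2
      have hmp : Proves true E (TaggedLit.mPartial q) := by
        rcases h3 with h1 | h1 | h1
        · exact closure hB (.minusPartial q hmd (Or.inr (Or.inl (hC _ h1))))
        · rcases (hC _ h1 : CInvElem E (TaggedLit.pSigma q.compl)) with hps | hpd
          · exact t6_key hB hmd hps
          · exact closure hB (.minusPartial q hmd (Or.inr (Or.inl hpd)))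
        · have hms : Proves true E (TaggedLit.mSigma q) := hC _ h1
          have := proves_step hB hms
          cases this with
          | minusSigma _ hall =>
          exact closure hB (.minusPartial q hmd (Or.inl hall))
      intro x hx
      rcases hx with rfl | hx
      · exact hmp
      · exact hC x hx
  | t7 E C r q hr hk hq hmem =>
      have hpq : Proves true E (TaggedLit.pDelta q) := hC _ hmem
      have heq := t7_equiv hB hr hk hq hpq
      exact ⟨basic_mod hB hr, shadow_t7 hB hr hk hq hpq hSh,
        fun x hx => cinv_transport heq (hC x hx),
        fun c => (hEq c).trans (heq c)⟩
  | t8 E C r q hr hk hq hmem =>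
      have hpq : Proves true E (TaggedLit.pPartial q) := hC _ hmem
      have heq := t8_equiv hB hr hk hq hpq
      exact ⟨basic_mod hB hr, shadow_t8 hB hr hk hq hpq hSh,
        fun x hx => cinv_transport heq (hC x hx),
        fun c => (hEq c).trans (heq c)⟩
  | t9 E C r q hr hk hq hmem =>
      have hmq : Proves true E (TaggedLit.mDelta q) := hC _ hmem
      have heq := t9_equiv hB hr hk hq hmq hSh
      exact ⟨basic_del hB, shadow_t9 hB hr hk hq hmq hSh,
        fun x hx => cinv_transport heq (hC x hx),
        fun c => (hEq c).trans (heq c)⟩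
  | t10 E C r q hr hk hq hmem =>
      have hmq : Proves true E (TaggedLit.mPartial q) := hC _ hmem
      have heq := t10_equiv hB hr hk hq hmq
      exact ⟨basic_del hB, shadow_t10 hB hr hk hq hmq hSh,
        fun x hx => cinv_transport heq (hC x hx),
        fun c => (hEq c).trans (heq c)⟩

end DLAux
/-- Preservation of conclusion equivalence along transitions:
if D is a basic defeasible theory with duplicated strict rules (separated
reasoning) and (D, ∅) ⟹ ⋯ ⟹ (D', C'), then D ≡ D'. -/
theorem transitions_preserve_equivalence (D D' : DTheory) (C' : Set TaggedLit)
    (hBasic : D.Basic) (hDup : D.DupStrictRules)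
    (hseq : Relation.ReflTransGen (DLTrans D.lits) (D, (∅ : Set TaggedLit)) (D', C')) :
    ∀ c : TaggedLit, Proves true D c ↔ Proves true D' c := by
  have key : ∀ s, Relation.ReflTransGen (DLTrans D.lits) (D, (∅ : Set TaggedLit)) s →
      DLAux.Inv D s := by
    intro s hs
    induction hs with
    | refl =>
        refine ⟨hBasic, ?_, fun x hx => absurd hx (Set.notMem_empty x), fun c => Iff.rfl⟩
        intro t ht hk
        exact Or.inl ⟨⟨t.body, t.head, RuleKind.defeasible⟩, hDup t ht hk, rfl, rfl,
          fun a ha => Or.inl ha⟩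
    | tail hab hbc ih => exact DLAux.inv_step ih hbc
  exact (key (D', C') hseq).2.2.2
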